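/- arXiv:2005.01949 — 6 statements merged into one kernel-verified Lean document; each statement's English description precedes it below -/
import Mathlib

section
/- If {T_i, 1 ≤ i ≤ n} is a non-negative supermartingale, then for any 0 < α < 1, E[max_{1≤i≤n} T_i^α] ≤ (E[T_1])^α / (1 − α). -/
/-!
Stopping a non-negative supermartingale at the first time it reaches level `t` gives Doob's
weak-type bound `t · P(max_i T_i ≥ t) ≤ E[T_1]`. Writing `c = E[T_1]` and `M = max_i T_i`, the
layer-cake formula then gives
`E[M^α] = α ∫₀^∞ t^(α-1) P(M ≥ t) dt ≤ α ∫₀^∞ t^(α-1) min(1, c/t) dt = c^α / (1 - α)`,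
the integral being finite exactly because `0 < α < 1`.
-/

open MeasureTheory Finset

theorem sup'_Icc_one_eq_sup'_range_min {α : Type*} [SemilatticeSup α] (f : ℕ → α) (N : ℕ)
    (h : (Icc 1 (N + 1)).Nonempty) :
    (Icc 1 (N + 1)).sup' h f =
      (range (N + 1)).sup' nonempty_range_add_one fun k => f (min (k + 1) (N + 1)) := by
  have himage : Icc 1 (N + 1) = (range (N + 1)).image (· + 1) := by
    rw [range_eq_Ico, image_add_right_Ico]; rfl
  simp only [himage, sup'_image]
  refine sup'_congr _ rfl fun k hk => ?_
  rw [Function.comp_apply, min_eq_left (by simpa using hk)]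

theorem min_add_one_mem_Icc {n : ℕ} (hn : 1 ≤ n) (k : ℕ) : min (k + 1) n ∈ Icc 1 n := by
  simp only [mem_Icc]; omega

theorem lintegral_Ioi_min_one_div_mul_rpow_le {c α : ℝ} (hc : 0 ≤ c) (hα0 : 0 < α)
    (hα1 : α < 1) :
    ∫⁻ t in Set.Ioi 0, ENNReal.ofReal (min 1 (c / t) * t ^ (α - 1)) ≤
      ENNReal.ofReal (c ^ α / (α * (1 - α))) := by
  rcases hc.eq_or_lt with rfl | hc
  · simp
  have h1α : (1 : ℝ) - α ≠ 0 := by linarith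
  rw [← Set.Ioc_union_Ioi_eq_Ioi hc.le,
    lintegral_union measurableSet_Ioi (Set.Ioc_disjoint_Ioi le_rfl)]
  have hsmall : ∫⁻ t in Set.Ioc 0 c, ENNReal.ofReal (min 1 (c / t) * t ^ (α - 1)) ≤
      ENNReal.ofReal (c ^ α / α) := by
    calc ∫⁻ t in Set.Ioc 0 c, ENNReal.ofReal (min 1 (c / t) * t ^ (α - 1))
        ≤ ∫⁻ t in Set.Ioc 0 c, ENNReal.ofReal (t ^ (α - 1)) := by
          refine setLIntegral_mono' measurableSet_Ioc fun t ht => ENNReal.ofReal_le_ofReal ?_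
          exact mul_le_of_le_one_left (Real.rpow_nonneg ht.1.le _) (min_le_left _ _)
      _ = ENNReal.ofReal (∫ t in Set.Ioc 0 c, t ^ (α - 1)) := by
          rw [ofReal_integral_eq_lintegral_ofReal]
          · exact (intervalIntegrable_iff_integrableOn_Ioc_of_le hc.le).1
              (intervalIntegral.intervalIntegrable_rpow' (by linarith))
          · filter_upwards [self_mem_ae_restrict measurableSet_Ioc] with t ht
            exact Real.rpow_nonneg ht.1.le _
      _ = ENNReal.ofReal (c ^ α / α) := by
          rw [← intervalIntegral.integral_of_le hc.le, integral_rpow (Or.inl (by linarith)),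
            sub_add_cancel, Real.zero_rpow hα0.ne', sub_zero]
  have hlarge : ∫⁻ t in Set.Ioi c, ENNReal.ofReal (min 1 (c / t) * t ^ (α - 1)) ≤
      ENNReal.ofReal (c ^ α / (1 - α)) := by
    calc ∫⁻ t in Set.Ioi c, ENNReal.ofReal (min 1 (c / t) * t ^ (α - 1))
        ≤ ∫⁻ t in Set.Ioi c, ENNReal.ofReal (c * t ^ (α - 2)) := by
          refine setLIntegral_mono' measurableSet_Ioi fun t ht => ENNReal.ofReal_le_ofReal ?_
          have ht0 : 0 < t := hc.trans ht
          calc min 1 (c / t) * t ^ (α - 1) ≤ c / t * t ^ (α - 1) :=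
                mul_le_mul_of_nonneg_right (min_le_right _ _) (Real.rpow_nonneg ht0.le _)
            _ = c * t ^ (α - 2) := by
                rw [show α - 1 = α - 2 + 1 by ring, Real.rpow_add_one ht0.ne']
                field_simp
      _ = ENNReal.ofReal (∫ t in Set.Ioi c, c * t ^ (α - 2)) := by
          rw [ofReal_integral_eq_lintegral_ofReal]
          · exact (integrableOn_Ioi_rpow_of_lt (by linarith) hc).const_mul c
          · filter_upwards [self_mem_ae_restrict measurableSet_Ioi] with t ht
            exact mul_nonneg hc.le (Real.rpow_nonneg (hc.trans ht).le _)
      _ = ENNReal.ofReal (c ^ α / (1 - α)) := by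
          rw [integral_const_mul, integral_Ioi_rpow_of_lt (by linarith) hc,
            show α - 2 + 1 = α - 1 by ring, Real.rpow_sub_one hc.ne']
          have hα1' : α - 1 ≠ 0 := by linarith
          congr 1
          field_simp
          ring
  calc _ ≤ ENNReal.ofReal (c ^ α / α) + ENNReal.ofReal (c ^ α / (1 - α)) :=
        add_le_add hsmall hlarge
    _ = ENNReal.ofReal (c ^ α / (α * (1 - α))) := by
        rw [← ENNReal.ofReal_add (by positivity) (div_nonneg (by positivity) (by linarith))]
        congr 1
        field_simp
        ring

theorem integral_rpow_le_of_mul_measureReal_le {Ω : Type*} {m : MeasurableSpace Ω}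
    {μ : Measure Ω} [IsProbabilityMeasure μ] {X : Ω → ℝ} (hX : 0 ≤ᵐ[μ] X)
    (hXm : AEMeasurable X μ) {c α : ℝ} (hα0 : 0 < α) (hα1 : α < 1)
    (htail : ∀ t, 0 < t → t * μ.real {ω | t ≤ X ω} ≤ c) :
    ∫ ω, X ω ^ α ∂μ ≤ c ^ α / (1 - α) := by
  have hc : 0 ≤ c := (mul_nonneg zero_le_one measureReal_nonneg).trans (htail 1 one_pos)
  have hmeas : ∀ t ∈ Set.Ioi (0 : ℝ),
      μ {ω | t ≤ X ω} * ENNReal.ofReal (t ^ (α - 1)) ≤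
        ENNReal.ofReal (min 1 (c / t) * t ^ (α - 1)) := by
    intro t ht
    rw [ENNReal.ofReal_mul (le_min zero_le_one (div_nonneg hc (le_of_lt ht))),
      ← ofReal_measureReal]
    gcongr
    exact le_min measureReal_le_one ((le_div_iff₀' ht).2 (htail t ht))
  have hlint : ∫⁻ ω, ENNReal.ofReal (X ω ^ α) ∂μ ≤ ENNReal.ofReal (c ^ α / (1 - α)) := by
    have : (1 : ℝ) - α ≠ 0 := by linarith
    calc ∫⁻ ω, ENNReal.ofReal (X ω ^ α) ∂μ
        = ENNReal.ofReal α * ∫⁻ t in Set.Ioi 0, μ {ω | t ≤ X ω} * ENNReal.ofReal (t ^ (α - 1)) :=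
          lintegral_rpow_eq_lintegral_meas_le_mul μ hX hXm hα0
      _ ≤ ENNReal.ofReal α * ENNReal.ofReal (c ^ α / (α * (1 - α))) := by
          gcongr
          exact (setLIntegral_mono' measurableSet_Ioi hmeas).trans
            (lintegral_Ioi_min_one_div_mul_rpow_le hc hα0 hα1)
      _ = ENNReal.ofReal (c ^ α / (1 - α)) := by
          rw [← ENNReal.ofReal_mul hα0.le]
          congr 1
          field_simp
  rw [integral_eq_lintegral_of_nonneg_ae (hX.mono fun ω hω => Real.rpow_nonneg hω α)
    (hXm.pow_const α).aestronglyMeasurable]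
  exact ENNReal.toReal_le_of_le_ofReal (div_nonneg (by positivity) (by linarith)) hlint

namespace MeasureTheory

variable {Ω : Type*} {m : MeasurableSpace Ω} {μ : Measure Ω}

/-- Re-indexes a filtration on `1, …, n` from `0` and freezes it after time `n`, so that it lives
on all of `ℕ`. -/
def Filtration.shiftClamp (𝒢 : Filtration ℕ m) (n : ℕ) : Filtration ℕ m where
  seq k := 𝒢 (min (k + 1) n)
  mono' _ _ h := 𝒢.mono (by omega)
  le' _ := 𝒢.le _

theorem supermartingale_shiftClamp [IsFiniteMeasure μ] {𝒢 : Filtration ℕ m} {T : ℕ → Ω → ℝ}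
    {n : ℕ} (hn : 1 ≤ n)
    (hadapt : ∀ i ∈ Icc 1 n, StronglyMeasurable[𝒢 i] (T i))
    (hint : ∀ i ∈ Icc 1 n, Integrable (T i) μ)
    (hsuper : ∀ i ∈ Ico 1 n, μ[T (i + 1)|𝒢 i] ≤ᵐ[μ] T i) :
    Supermartingale (fun k => T (min (k + 1) n)) (𝒢.shiftClamp n) μ := by
  refine supermartingale_nat (fun k => hadapt _ (min_add_one_mem_Icc hn k))
    (fun k => hint _ (min_add_one_mem_Icc hn k)) fun i => ?_
  change μ[T (min (i + 1 + 1) n)|𝒢 (min (i + 1) n)] ≤ᵐ[μ] T (min (i + 1) n)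
  rcases lt_or_ge (i + 1) n with hi | hi
  · rw [min_eq_left (Nat.succ_le_of_lt hi), min_eq_left hi.le]
    exact hsuper _ (mem_Ico.2 ⟨by omega, hi⟩)
  · have hmem : n ∈ Icc 1 n := right_mem_Icc.2 hn
    rw [min_eq_right (by omega : n ≤ i + 1 + 1), min_eq_right hi,
      condExp_of_stronglyMeasurable (𝒢.le n) (hadapt n hmem) (hint n hmem)]

theorem Supermartingale.maximal_ineq [IsFiniteMeasure μ] {ℱ : Filtration ℕ m} {f : ℕ → Ω → ℝ}
    (hf : Supermartingale f ℱ μ) (hnonneg : ∀ k, 0 ≤ᵐ[μ] f k) (ε : ℝ) (N : ℕ) :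
    ε * μ.real {ω | ε ≤ (range (N + 1)).sup' nonempty_range_add_one fun k => f k ω} ≤
      ∫ ω, f 0 ω ∂μ := by
  set A := {ω | ε ≤ (range (N + 1)).sup' nonempty_range_add_one fun k => f k ω}
  set τ : Ω → ℕ := hittingBtwn f {y | ε ≤ y} 0 N
  have hτ : IsStoppingTime ℱ fun ω => (τ ω : WithTop ℕ) :=
    hf.stronglyAdapted.adapted.isStoppingTime_hittingBtwn measurableSet_Ici
  have hτN : ∀ ω, (τ ω : WithTop ℕ) ≤ N := fun ω => WithTop.coe_le_coe.2 (hittingBtwn_le ω)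
  have hint : Integrable (stoppedValue f fun ω => (τ ω : WithTop ℕ)) μ :=
    integrable_stoppedValue ℕ hτ hf.integrable hτN
  have hA : MeasurableSet A := measurableSet_le measurable_const
    (measurable_range_sup'' fun k _ => (hf.stronglyAdapted k).measurable.le (ℱ.le k))
  have hε_le : ∀ ω ∈ A, ε ≤ stoppedValue f (fun ω => (τ ω : WithTop ℕ)) ω := by
    intro ω hω
    simp only [A, Set.mem_ofPred_eq, le_sup'_iff, mem_range] at hω
    obtain ⟨j, hjN, hj⟩ := hω
    exact stoppedValue_hittingBtwn_mem ⟨j, ⟨j.zero_le, Nat.lt_succ_iff.1 hjN⟩, hj⟩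
  have hτ_nonneg : 0 ≤ᵐ[μ] stoppedValue f fun ω => (τ ω : WithTop ℕ) := by
    filter_upwards [ae_all_iff.2 hnonneg] with ω hω using hω (τ ω)
  have hstop : ∫ ω, stoppedValue f (fun ω => (τ ω : WithTop ℕ)) ω ∂μ ≤ ∫ ω, f 0 ω ∂μ := by
    have h := hf.neg.expected_stoppedValue_mono (isStoppingTime_const ℱ 0) hτ
      (fun ω => WithTop.coe_le_coe.2 (τ ω).zero_le) hτN
    rw [stoppedValue_const, stoppedValue_neg] at h
    simpa only [Pi.neg_apply, integral_neg, neg_le_neg_iff] using h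
  calc ε * μ.real A ≤ ∫ ω in A, stoppedValue f (fun ω => (τ ω : WithTop ℕ)) ω ∂μ :=
        setIntegral_ge_of_const_le_real hA (measure_ne_top _ _) hε_le hint.integrableOn
    _ ≤ ∫ ω, stoppedValue f (fun ω => (τ ω : WithTop ℕ)) ω ∂μ :=
        setIntegral_le_integral hint hτ_nonneg
    _ ≤ ∫ ω, f 0 ω ∂μ := hstop

end MeasureTheory

/-- If `{T_i, 1 ≤ i ≤ n}` is a non-negative supermartingale (adapted to a filtration `𝒢`
with `E[T_{i+1} | 𝒢_i] ≤ T_i` a.s.), then for any `0 < α < 1`,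
`E[max_{1≤i≤n} T_i^α] ≤ (E[T_1])^α / (1 − α)`. -/
theorem stmt0 {Ω : Type*} {m : MeasurableSpace Ω} (μ : Measure Ω) [IsProbabilityMeasure μ]
    (𝒢 : Filtration ℕ m) (T : ℕ → Ω → ℝ) (n : ℕ) (hn : 1 ≤ n)
    (hadapt : ∀ i ∈ Finset.Icc 1 n, StronglyMeasurable[𝒢 i] (T i))
    (hint : ∀ i ∈ Finset.Icc 1 n, Integrable (T i) μ)
    (hsuper : ∀ i ∈ Finset.Ico 1 n, μ[T (i + 1)|𝒢 i] ≤ᵐ[μ] T i)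
    (hnonneg : ∀ i ∈ Finset.Icc 1 n, 0 ≤ᵐ[μ] T i)
    (α : ℝ) (hα0 : 0 < α) (hα1 : α < 1) :
    ∫ ω, ((Finset.Icc 1 n).sup' (Finset.nonempty_Icc.mpr hn) fun i => T i ω) ^ α ∂μ ≤
      (∫ ω, T 1 ω ∂μ) ^ α / (1 - α) := by
  obtain ⟨N, rfl⟩ : ∃ N, n = N + 1 := ⟨n - 1, by omega⟩
  have h1 : 1 ∈ Icc 1 (N + 1) := left_mem_Icc.2 hn
  refine integral_rpow_le_of_mul_measureReal_le ?_ ?_ hα0 hα1 fun t _ => ?_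
  · filter_upwards [hnonneg 1 h1] with ω hω using hω.trans (le_sup' (fun i => T i ω) h1)
  · have hT : ∀ i ∈ Icc 1 (N + 1), Measurable (T i) := fun i hi =>
      (hadapt i hi).measurable.le (𝒢.le i)
    exact (measurable_sup' (nonempty_Icc.2 hn) hT).aemeasurable.congr
      (.of_forall fun ω => Finset.sup'_apply _ _ ω)
  · have hmax := (supermartingale_shiftClamp hn hadapt hint hsuper).maximal_ineq
      (fun k => hnonneg _ (min_add_one_mem_Icc hn k)) t N
    simpa only [sup'_Icc_one_eq_sup'_range_min, zero_add, min_eq_left hn] using hmax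
end

section
/- Let p > 2 and let {X_i, i ≥ 1} be a sequence of NA random variables with E[X_i] = 0 for all i, such that B_n := Σ_{i=1}^n E[X_i²] and A(p) := Σ_{i=1}^n ||X_i||_{w,p}^p are each bounded by a constant multiple of n. Then for any x > 0 there exists a positive constant C_x not depending on n such that for all n ≥ 2, P(max_{1≤k≤n} S_k > nx) ≤ C_x (ln n)^p / n^{p−1}. -/
/-!
Truncate at level `b = n x / (p log n)`. The event that some `|X_i|`, `i ≤ n`, exceeds `b` has
probability at most `A_n / b ^ p`, which is of order `(log n) ^ p / n ^ (p - 1)`. Off that event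
every `S_k` is the sum of the truncations `clip b X_i`, monotone images of the `X_i`, so negative
association bounds the exponential moment of their sum by the product of the individual ones.
As `|clip b X_i / b| ≤ 1` and `E X_i = 0`, each factor is at most `exp (2 E X_i ^ 2 / b ^ 2)`, and
Chernoff's bound at `t = 1 / b` gives `exp (2 B_n / b ^ 2 - n x / b) = O(n ^ (-p))` for each of the
`n` values of `k`, because `n x / b = p log n` while `B_n / b ^ 2 = O((log n) ^ 2 / n)` stays bounded.
-/

open MeasureTheory Finset

/-- A sequence `{X_i, i ≥ 1}` is negatively associated (NA): for every pair of disjoint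
finite subsets `A₁, A₂` of `{1, 2, …}` and all coordinatewise nondecreasing functions
`f₁, f₂`, one has `Cov(f₁(X_i, i ∈ A₁), f₂(X_j, j ∈ A₂)) ≤ 0` whenever the covariance
exists. -/
def NegAssoc {Ω : Type*} [MeasurableSpace Ω] (μ : Measure Ω) (X : ℕ → Ω → ℝ) : Prop :=
  ∀ A₁ A₂ : Finset ℕ, (∀ i ∈ A₁, 1 ≤ i) → (∀ j ∈ A₂, 1 ≤ j) → Disjoint A₁ A₂ →
    ∀ (f₁ : (↥A₁ → ℝ) → ℝ) (f₂ : (↥A₂ → ℝ) → ℝ), Monotone f₁ → Monotone f₂ →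
      Integrable (fun ω => f₁ fun i => X i.1 ω) μ →
      Integrable (fun ω => f₂ fun j => X j.1 ω) μ →
      Integrable (fun ω => (f₁ fun i => X i.1 ω) * (f₂ fun j => X j.1 ω)) μ →
      ∫ ω, (f₁ fun i => X i.1 ω) * (f₂ fun j => X j.1 ω) ∂μ ≤
        (∫ ω, (f₁ fun i => X i.1 ω) ∂μ) * ∫ ω, (f₂ fun j => X j.1 ω) ∂μ

/-- The partial sum `S_k = ∑_{i=1}^k X_i`. -/
def pSum {Ω : Type*} (X : ℕ → Ω → ℝ) (k : ℕ) (ω : Ω) : ℝ := ∑ i ∈ Finset.Icc 1 k, X i ω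

/-- The weak moment of order `p`: `‖Z‖_{w,p}^p = sup_{x>0} x^p P(|Z| > x)`. -/
noncomputable def weakMoment {Ω : Type*} [MeasurableSpace Ω] (μ : Measure Ω) (p : ℝ)
    (Z : Ω → ℝ) : ℝ :=
  sSup {r : ℝ | ∃ x : ℝ, 0 < x ∧ r = x ^ p * (μ {ω | x < |Z ω|}).toReal}

noncomputable def clip (b y : ℝ) : ℝ := max (-b) (min y b)

lemma clip_mono (b : ℝ) : Monotone (clip b) :=
  fun _ _ h => max_le_max le_rfl (min_le_min h le_rfl)

lemma continuous_clip (b : ℝ) : Continuous (clip b) := by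
  unfold clip; fun_prop

lemma clip_eq_self {b y : ℝ} (h : |y| ≤ b) : clip b y = y := by
  rw [abs_le] at h
  rw [clip, min_eq_left h.2, max_eq_right h.1]

lemma abs_clip_le {b : ℝ} (hb : 0 ≤ b) (y : ℝ) : |clip b y| ≤ b := by
  rw [clip, abs_le]; grind

lemma abs_clip_le_abs {b : ℝ} (hb : 0 ≤ b) (y : ℝ) : |clip b y| ≤ |y| := by
  rw [abs_le, clip]; constructor <;> cases abs_cases y <;> grind

lemma abs_clip_sub_le {b : ℝ} (hb : 0 < b) (y : ℝ) : |clip b y - y| ≤ y ^ 2 / b := by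
  rcases le_or_gt |y| b with hy | hy
  · rw [clip_eq_self hy, sub_self, abs_zero]; positivity
  · have hclip : |clip b y - y| ≤ |y| := by
      rw [clip]; cases abs_cases y <;> cases abs_cases (max (-b) (min y b) - y) <;> grind
    rw [le_div_iff₀ hb, ← sq_abs]
    nlinarith [abs_nonneg y]

section Integrals

variable {Ω : Type*} [MeasurableSpace Ω] {μ : Measure Ω}

lemma integrable_clip_comp [IsFiniteMeasure μ] {X : Ω → ℝ} (hX : AEStronglyMeasurable X μ)
    {b : ℝ} (hb : 0 ≤ b) : Integrable (fun ω => clip b (X ω)) μ :=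
  .of_bound ((continuous_clip b).comp_aestronglyMeasurable hX) b
    (ae_of_all _ fun ω => abs_clip_le hb (X ω))

lemma integrable_prod_comp [IsFiniteMeasure μ] {ι : Type*} {X : ι → Ω → ℝ}
    (hX : ∀ i, Measurable (X i)) {g : ℝ → ℝ} (hg : Measurable g) (hg0 : ∀ y, 0 ≤ g y) {C : ℝ}
    (hgC : ∀ y, g y ≤ C) (s : Finset ι) : Integrable (fun ω => ∏ i ∈ s, g (X i ω)) μ := by
  refine .of_bound (Finset.measurable_prod s fun i _ => hg.comp (hX i)).aestronglyMeasurable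
    (C ^ s.card) (ae_of_all _ fun ω => ?_)
  rw [Real.norm_of_nonneg (prod_nonneg fun i _ => hg0 _), ← prod_const]
  exact prod_le_prod (fun i _ => hg0 _) fun i _ => hgC _

lemma integral_exp_le_of_abs_le_one [IsProbabilityMeasure μ] {Y : Ω → ℝ}
    (hY : AEStronglyMeasurable Y μ) (h : ∀ ω, |Y ω| ≤ 1) :
    ∫ ω, Real.exp (Y ω) ∂μ ≤ Real.exp (∫ ω, Y ω ∂μ + ∫ ω, Y ω ^ 2 ∂μ) := by
  have hY1 : Integrable Y μ := .of_bound hY 1 (ae_of_all _ h)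
  have hY2 : Integrable (fun ω => Y ω ^ 2) μ :=
    .of_bound (hY.pow 2) 1 (ae_of_all _ fun ω => by
      rw [Real.norm_eq_abs, abs_pow]; exact pow_le_one₀ (abs_nonneg _) (h ω))
  have hexp : Integrable (fun ω => Real.exp (Y ω)) μ :=
    .of_bound (Real.continuous_exp.comp_aestronglyMeasurable hY) (Real.exp 1)
      (ae_of_all _ fun ω => by
        rw [Real.norm_of_nonneg (Real.exp_pos _).le]
        exact Real.exp_le_exp.2 (abs_le.1 (h ω)).2)
  have h1Y : Integrable (fun ω => 1 + Y ω) μ := (integrable_const 1).add hY1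
  have hquad : ∀ ω, Real.exp (Y ω) ≤ 1 + Y ω + Y ω ^ 2 := fun ω => by
    linarith [(abs_le.1 (Real.abs_exp_sub_one_sub_id_le (h ω))).2]
  calc ∫ ω, Real.exp (Y ω) ∂μ ≤ ∫ ω, (1 + Y ω + Y ω ^ 2) ∂μ :=
        integral_mono hexp (h1Y.add hY2) hquad
    _ = 1 + (∫ ω, Y ω ∂μ + ∫ ω, Y ω ^ 2 ∂μ) := by
        rw [integral_add h1Y hY2, integral_add (integrable_const 1) hY1]
        simp only [integral_const, probReal_univ, smul_eq_mul, one_mul]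
        ring
    _ ≤ Real.exp (∫ ω, Y ω ∂μ + ∫ ω, Y ω ^ 2 ∂μ) := by
        linarith [Real.add_one_le_exp (∫ ω, Y ω ∂μ + ∫ ω, Y ω ^ 2 ∂μ)]

lemma abs_integral_clip_le [IsFiniteMeasure μ] {X : Ω → ℝ} (hX : Integrable X μ)
    (hX2 : Integrable (fun ω => X ω ^ 2) μ) (hmean : ∫ ω, X ω ∂μ = 0) {b : ℝ} (hb : 0 < b) :
    |∫ ω, clip b (X ω) ∂μ| ≤ (∫ ω, X ω ^ 2 ∂μ) / b := by
  have hc := integrable_clip_comp hX.aestronglyMeasurable hb.le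
  calc |∫ ω, clip b (X ω) ∂μ| = |∫ ω, (clip b (X ω) - X ω) ∂μ| := by
        rw [integral_sub hc hX, hmean, sub_zero]
    _ ≤ ∫ ω, |clip b (X ω) - X ω| ∂μ := abs_integral_le_integral_abs
    _ ≤ ∫ ω, X ω ^ 2 / b ∂μ :=
        integral_mono (hc.sub hX).abs (hX2.div_const b) fun ω => abs_clip_sub_le hb _
    _ = (∫ ω, X ω ^ 2 ∂μ) / b := integral_div b _

lemma integral_exp_clip_div_le [IsProbabilityMeasure μ] {X : Ω → ℝ} (hX : Integrable X μ)
    (hX2 : Integrable (fun ω => X ω ^ 2) μ) (hmean : ∫ ω, X ω ∂μ = 0) {b : ℝ} (hb : 0 < b) :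
    ∫ ω, Real.exp (clip b (X ω) / b) ∂μ ≤ Real.exp (2 * (∫ ω, X ω ^ 2 ∂μ) / b ^ 2) := by
  have hc := integrable_clip_comp hX.aestronglyMeasurable hb.le
  have hc2 : Integrable (fun ω => clip b (X ω) ^ 2) μ :=
    hX2.mono' (hc.aestronglyMeasurable.pow 2) (ae_of_all _ fun ω => by
      rw [Real.norm_of_nonneg (sq_nonneg _)]; exact sq_le_sq.2 (abs_clip_le_abs hb.le _))
  have hunit : ∀ ω, |clip b (X ω) / b| ≤ 1 := fun ω => by
    rw [abs_div, abs_of_pos hb, div_le_one hb]; exact abs_clip_le hb.le _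
  refine (integral_exp_le_of_abs_le_one (hc.div_const b).aestronglyMeasurable hunit).trans
    (Real.exp_le_exp.2 ?_)
  have hmean_clip : ∫ ω, clip b (X ω) ∂μ ≤ (∫ ω, X ω ^ 2 ∂μ) / b :=
    (le_abs_self _).trans (abs_integral_clip_le hX hX2 hmean hb)
  have hsq_clip : ∫ ω, clip b (X ω) ^ 2 ∂μ ≤ ∫ ω, X ω ^ 2 ∂μ :=
    integral_mono hc2 hX2 fun ω => sq_le_sq.2 (abs_clip_le_abs hb.le _)
  simp only [div_pow, integral_div]
  calc (∫ ω, clip b (X ω) ∂μ) / b + (∫ ω, clip b (X ω) ^ 2 ∂μ) / b ^ 2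
      ≤ (∫ ω, X ω ^ 2 ∂μ) / b / b + (∫ ω, X ω ^ 2 ∂μ) / b ^ 2 := by gcongr
    _ = 2 * (∫ ω, X ω ^ 2 ∂μ) / b ^ 2 := by ring

end Integrals

section NegAssoc

variable {Ω : Type*} [MeasurableSpace Ω] {μ : Measure Ω} [IsProbabilityMeasure μ]
  {X : ℕ → Ω → ℝ}

lemma NegAssoc.integral_prod_le (hNA : NegAssoc μ X) (hmeas : ∀ i, Measurable (X i))
    {g : ℝ → ℝ} (hg : Monotone g) (hg0 : ∀ y, 0 ≤ g y) {C : ℝ} (hgC : ∀ y, g y ≤ C)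
    {s : Finset ℕ} (hs : ∀ i ∈ s, 1 ≤ i) :
    ∫ ω, ∏ i ∈ s, g (X i ω) ∂μ ≤ ∏ i ∈ s, ∫ ω, g (X i ω) ∂μ := by
  have hint : ∀ t : Finset ℕ, Integrable (fun ω => ∏ i ∈ t, g (X i ω)) μ :=
    integrable_prod_comp hmeas hg.measurable hg0 hgC
  induction s using Finset.induction_on with
  | empty => simp
  | insert a s ha ih =>
    have hs' : ∀ i ∈ s, 1 ≤ i := fun i hi => hs i (mem_insert_of_mem hi)
    have hcov := hNA s {a} hs' (by simpa using hs a (mem_insert_self a s))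
      (disjoint_singleton_right.2 ha) (fun v => ∏ i : s, g (v i)) (fun v => g (v ⟨a, mem_singleton_self a⟩))
      (fun v w hvw => prod_le_prod (fun i _ => hg0 _) fun i _ => hg (hvw i))
      (fun v w hvw => hg (hvw _))
    have hprod : ∀ ω, ∏ i : s, g (X i ω) = ∏ i ∈ s, g (X i ω) := fun ω =>
      prod_coe_sort s fun i => g (X i ω)
    simp only [hprod] at hcov
    have hga : Integrable (fun ω => g (X a ω)) μ := by simpa using hint {a}
    calc ∫ ω, ∏ i ∈ insert a s, g (X i ω) ∂μ = ∫ ω, (∏ i ∈ s, g (X i ω)) * g (X a ω) ∂μ := by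
          simp only [prod_insert ha, mul_comm]
      _ ≤ (∫ ω, ∏ i ∈ s, g (X i ω) ∂μ) * ∫ ω, g (X a ω) ∂μ :=
          hcov (hint s) hga (by simpa [prod_insert ha, mul_comm] using hint (insert a s))
      _ ≤ (∏ i ∈ s, ∫ ω, g (X i ω) ∂μ) * ∫ ω, g (X a ω) ∂μ :=
          mul_le_mul_of_nonneg_right (ih hs') (integral_nonneg fun ω => hg0 _)
      _ = ∏ i ∈ insert a s, ∫ ω, g (X i ω) ∂μ := by rw [prod_insert ha, mul_comm]

lemma NegAssoc.measureReal_le_sum_clip_le (hNA : NegAssoc μ X) (hmeas : ∀ i, Measurable (X i))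
    (hint : ∀ i, 1 ≤ i → Integrable (X i) μ) (hmean : ∀ i, 1 ≤ i → ∫ ω, X i ω ∂μ = 0)
    (hX2 : ∀ i, 1 ≤ i → Integrable (fun ω => X i ω ^ 2) μ) {s : Finset ℕ} (hs : ∀ i ∈ s, 1 ≤ i)
    (a : ℝ) {b : ℝ} (hb : 0 < b) :
    μ.real {ω | a ≤ ∑ i ∈ s, clip b (X i ω)} ≤
      Real.exp (2 * (∑ i ∈ s, ∫ ω, X i ω ^ 2 ∂μ) / b ^ 2 - a / b) := by
  set g : ℝ → ℝ := fun y => Real.exp (clip b y / b)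
  have hg : Monotone g := fun y z h =>
    Real.exp_le_exp.2 (div_le_div_of_nonneg_right (clip_mono b h) hb.le)
  have hgC : ∀ y, g y ≤ Real.exp 1 := fun y =>
    Real.exp_le_exp.2 ((div_le_one hb).2 (abs_le.1 (abs_clip_le hb.le y)).2)
  have hmgf : ∀ ω, Real.exp (b⁻¹ * ∑ i ∈ s, clip b (X i ω)) = ∏ i ∈ s, g (X i ω) := fun ω => by
    simp only [g, mul_sum, Real.exp_sum, inv_mul_eq_div]
  have hint_mgf : Integrable (fun ω => Real.exp (b⁻¹ * ∑ i ∈ s, clip b (X i ω))) μ := by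
    simpa only [hmgf] using
      integrable_prod_comp hmeas hg.measurable (fun y => (Real.exp_pos _).le) hgC s
  calc μ.real {ω | a ≤ ∑ i ∈ s, clip b (X i ω)}
      ≤ Real.exp (-b⁻¹ * a) * ProbabilityTheory.mgf (fun ω => ∑ i ∈ s, clip b (X i ω)) μ b⁻¹ :=
        ProbabilityTheory.measure_ge_le_exp_mul_mgf a (inv_nonneg.2 hb.le) hint_mgf
    _ ≤ Real.exp (-b⁻¹ * a) * ∏ i ∈ s, Real.exp (2 * (∫ ω, X i ω ^ 2 ∂μ) / b ^ 2) := by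
        gcongr
        simp only [ProbabilityTheory.mgf, hmgf]
        refine (hNA.integral_prod_le hmeas hg (fun y => (Real.exp_pos _).le) hgC hs).trans ?_
        exact prod_le_prod (fun i _ => integral_nonneg fun ω => (Real.exp_pos _).le) fun i hi =>
          integral_exp_clip_div_le (hint i (hs i hi)) (hX2 i (hs i hi)) (hmean i (hs i hi)) hb
    _ = Real.exp (2 * (∑ i ∈ s, ∫ ω, X i ω ^ 2 ∂μ) / b ^ 2 - a / b) := by
        rw [← Real.exp_sum, ← Real.exp_add, mul_sum, sum_div]
        ring_nf

end NegAssoc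

section MaximalInequality

variable {Ω : Type*} [MeasurableSpace Ω] {μ : Measure Ω}

lemma measureReal_lt_abs_le_weakMoment_div {p : ℝ} {Z : Ω → ℝ}
    (hZ : BddAbove {r : ℝ | ∃ x : ℝ, 0 < x ∧ r = x ^ p * (μ {ω | x < |Z ω|}).toReal})
    {b : ℝ} (hb : 0 < b) : μ.real {ω | b < |Z ω|} ≤ weakMoment μ p Z / b ^ p := by
  rw [le_div_iff₀ (by positivity), mul_comm]
  exact le_csSup hZ ⟨b, hb, rfl⟩

lemma measureReal_exists_lt_pSum_le_clip [IsFiniteMeasure μ] (X : ℕ → Ω → ℝ) (n : ℕ) (a b : ℝ) :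
    μ.real {ω | ∃ k ∈ Icc 1 n, a < pSum X k ω} ≤
      ∑ i ∈ Icc 1 n, μ.real {ω | b < |X i ω|} +
        ∑ k ∈ Icc 1 n, μ.real {ω | a ≤ ∑ i ∈ Icc 1 k, clip b (X i ω)} := by
  have hsub : {ω | ∃ k ∈ Icc 1 n, a < pSum X k ω} ⊆
      (⋃ i ∈ Icc 1 n, {ω | b < |X i ω|}) ∪
        ⋃ k ∈ Icc 1 n, {ω | a ≤ ∑ i ∈ Icc 1 k, clip b (X i ω)} := by
    rintro ω ⟨k, hk, hlt⟩
    by_cases hsmall : ∀ i ∈ Icc 1 n, |X i ω| ≤ b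
    · refine Or.inr (Set.mem_biUnion hk ?_)
      have hclip : ∑ i ∈ Icc 1 k, clip b (X i ω) = pSum X k ω :=
        sum_congr rfl fun i hi =>
          clip_eq_self (hsmall i (Icc_subset_Icc_right (mem_Icc.1 hk).2 hi))
      show a ≤ _
      rw [hclip]
      exact hlt.le
    · push Not at hsmall
      obtain ⟨i, hi, hbi⟩ := hsmall
      exact Or.inl (Set.mem_biUnion hi hbi)
  exact (measureReal_mono hsub).trans ((measureReal_union_le _ _).trans
    (add_le_add (measureReal_biUnion_finset_le _ _) (measureReal_biUnion_finset_le _ _)))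

theorem NegAssoc.measureReal_exists_lt_pSum_le [IsProbabilityMeasure μ] {X : ℕ → Ω → ℝ}
    (hNA : NegAssoc μ X) (hmeas : ∀ i, Measurable (X i))
    (hint : ∀ i, 1 ≤ i → Integrable (X i) μ) (hmean : ∀ i, 1 ≤ i → ∫ ω, X i ω ∂μ = 0)
    (hX2 : ∀ i, 1 ≤ i → Integrable (fun ω => X i ω ^ 2) μ) {p : ℝ}
    (hA : ∀ i, 1 ≤ i →
      BddAbove {r : ℝ | ∃ x : ℝ, 0 < x ∧ r = x ^ p * (μ {ω | x < |X i ω|}).toReal})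
    (n : ℕ) (a : ℝ) {b : ℝ} (hb : 0 < b) :
    μ.real {ω | ∃ k ∈ Icc 1 n, a < pSum X k ω} ≤
      (∑ i ∈ Icc 1 n, weakMoment μ p (X i)) / b ^ p +
        n * Real.exp (2 * (∑ i ∈ Icc 1 n, ∫ ω, X i ω ^ 2 ∂μ) / b ^ 2 - a / b) := by
  refine (measureReal_exists_lt_pSum_le_clip X n a b).trans (add_le_add ?_ ?_)
  · rw [sum_div]
    exact sum_le_sum fun i hi =>
      measureReal_lt_abs_le_weakMoment_div (hA i (mem_Icc.1 hi).1) hb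
  · calc ∑ k ∈ Icc 1 n, μ.real {ω | a ≤ ∑ i ∈ Icc 1 k, clip b (X i ω)}
        ≤ ∑ _k ∈ Icc 1 n,
            Real.exp (2 * (∑ i ∈ Icc 1 n, ∫ ω, X i ω ^ 2 ∂μ) / b ^ 2 - a / b) := by
          refine sum_le_sum fun k hk => ?_
          refine (hNA.measureReal_le_sum_clip_le hmeas hint hmean hX2
            (fun i hi => (mem_Icc.1 hi).1) a hb).trans ?_
          gcongr
          exact (mem_Icc.1 hk).2
      _ = n * Real.exp (2 * (∑ i ∈ Icc 1 n, ∫ ω, X i ω ^ 2 ∂μ) / b ^ 2 - a / b) := by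
          rw [sum_const, Nat.card_Icc, Nat.add_sub_cancel, nsmul_eq_mul]

end MaximalInequality

section Asymptotics

open Real

lemma log_sq_le_four_mul {n : ℝ} (hn : 1 ≤ n) : log n ^ 2 ≤ 4 * n := by
  have hn0 : 0 < n := by linarith
  have hsqrt : log n ≤ 2 * √n := by
    have := log_le_sub_one_of_pos (sqrt_pos.2 hn0)
    rw [log_sqrt hn0.le] at this
    linarith
  calc log n ^ 2 ≤ (2 * √n) ^ 2 := pow_le_pow_left₀ (log_nonneg hn) hsqrt 2
    _ = 4 * n := by rw [mul_pow, sq_sqrt hn0.le]; norm_num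

lemma div_rpow_eq_of_eq_div_log {n x p b : ℝ} (hn : 1 < n) (hx : 0 < x) (hp : 0 < p)
    (hb : b = n * x / (p * log n)) : n / b ^ p = (p / x) ^ p * log n ^ p / n ^ (p - 1) := by
  have hL := log_pos hn
  rw [hb, div_rpow (by positivity) (by positivity), mul_rpow (by positivity) hx.le,
    mul_rpow hp.le hL.le, div_rpow hp.le hx.le, rpow_sub_one (by positivity)]
  field_simp

lemma mul_exp_le_of_eq_div_log {n x p b B : ℝ} (hn : 2 ≤ n) (hx : 0 < x) (hp : 0 < p)
    (hB : 0 ≤ B) (hb : b = n * x / (p * log n)) :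
    n * exp (2 * (B * n) / b ^ 2 - n * x / b) ≤
      exp (8 * B * p ^ 2 / x ^ 2) / log 2 ^ p * log n ^ p / n ^ (p - 1) := by
  have hn0 : 0 < n := by linarith
  have hlog2 : 0 < log 2 := log_pos one_lt_two
  have hlog : log 2 ≤ log n := log_le_log two_pos hn
  have hL : 0 < log n := hlog2.trans_le hlog
  have hexponent : 2 * (B * n) / b ^ 2 - n * x / b ≤ 8 * B * p ^ 2 / x ^ 2 - p * log n := by
    have hquot : n * x / b = p * log n := by rw [hb]; field_simp
    have hvar : 2 * (B * n) / b ^ 2 = 2 * B * p ^ 2 * log n ^ 2 / (n * x ^ 2) := by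
      rw [hb]; field_simp
    rw [hquot, hvar]
    gcongr ?_ - _
    calc 2 * B * p ^ 2 * log n ^ 2 / (n * x ^ 2) ≤ 2 * B * p ^ 2 * (4 * n) / (n * x ^ 2) := by
          gcongr; exact log_sq_le_four_mul (by linarith)
      _ = 8 * B * p ^ 2 / x ^ 2 := by field_simp; ring
  have hpow : n * exp (-(p * log n)) = 1 / n ^ (p - 1) := by
    rw [show -(p * log n) = log n * -p by ring, ← rpow_def_of_pos hn0, rpow_neg hn0.le,
      rpow_sub_one hn0.ne']
    field_simp
  have hlog_ratio : 1 ≤ log n ^ p / log 2 ^ p :=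
    (one_le_div (by positivity)).2 (rpow_le_rpow hlog2.le hlog hp.le)
  calc n * exp (2 * (B * n) / b ^ 2 - n * x / b)
      ≤ n * exp (8 * B * p ^ 2 / x ^ 2 - p * log n) := by gcongr
    _ = exp (8 * B * p ^ 2 / x ^ 2) * (1 / n ^ (p - 1)) := by
        rw [sub_eq_add_neg, exp_add, ← hpow]; ring
    _ ≤ exp (8 * B * p ^ 2 / x ^ 2) * (1 / n ^ (p - 1)) * (log n ^ p / log 2 ^ p) :=
        le_mul_of_one_le_right (by positivity) hlog_ratio
    _ = exp (8 * B * p ^ 2 / x ^ 2) / log 2 ^ p * log n ^ p / n ^ (p - 1) := by ring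

end Asymptotics

/-- Remark after Proposition 2.2: for `p > 2` and centered NA random variables whose
`B_n = ∑_{i=1}^n E[X_i²]` and `A(p) = ∑_{i=1}^n ‖X_i‖_{w,p}^p` grow at most linearly in `n`,
for any `x > 0` there is `C_x > 0` independent of `n` with
`P(max_{1≤k≤n} S_k > nx) ≤ C_x (ln n)^p / n^{p−1}` for all `n ≥ 2`. -/
theorem stmt5 {Ω : Type*} [MeasurableSpace Ω] (μ : Measure Ω) [IsProbabilityMeasure μ]
    (X : ℕ → Ω → ℝ) (hmeas : ∀ i, Measurable (X i)) (hNA : NegAssoc μ X)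
    (hint : ∀ i, 1 ≤ i → Integrable (X i) μ)
    (hmean : ∀ i, 1 ≤ i → ∫ ω, X i ω ∂μ = 0)
    (p : ℝ) (hp : 2 < p)
    (hB : ∀ i, 1 ≤ i → Integrable (fun ω => X i ω ^ 2) μ)
    (hA : ∀ i, 1 ≤ i →
      BddAbove {r : ℝ | ∃ x : ℝ, 0 < x ∧ r = x ^ p * (μ {ω | x < |X i ω|}).toReal})
    (CB CA : ℝ)
    (hCB : ∀ n : ℕ, (∑ i ∈ Finset.Icc 1 n, ∫ ω, X i ω ^ 2 ∂μ) ≤ CB * n)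
    (hCA : ∀ n : ℕ, (∑ i ∈ Finset.Icc 1 n, weakMoment μ p (X i)) ≤ CA * n)
    (x : ℝ) (hx : 0 < x) :
    ∃ C : ℝ, 0 < C ∧ ∀ n : ℕ, 2 ≤ n →
      (μ {ω | ∃ k ∈ Finset.Icc 1 n, (n : ℝ) * x < pSum X k ω}).toReal ≤
        C * Real.log n ^ p / (n : ℝ) ^ (p - 1) := by
  have hp0 : 0 < p := by linarith
  refine ⟨|CA| * (p / x) ^ p + Real.exp (8 * |CB| * p ^ 2 / x ^ 2) / Real.log 2 ^ p,
    by positivity, fun n hn => ?_⟩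
  have hn2 : (2 : ℝ) ≤ n := by exact_mod_cast hn
  set b := n * x / (p * Real.log n) with hb
  have hb0 : 0 < b := by have := Real.log_pos (by linarith : (1 : ℝ) < n); positivity
  calc (μ {ω | ∃ k ∈ Icc 1 n, (n : ℝ) * x < pSum X k ω}).toReal
      ≤ (∑ i ∈ Icc 1 n, weakMoment μ p (X i)) / b ^ p +
          n * Real.exp (2 * (∑ i ∈ Icc 1 n, ∫ ω, X i ω ^ 2 ∂μ) / b ^ 2 - n * x / b) :=
        hNA.measureReal_exists_lt_pSum_le hmeas hint hmean hB hA n _ hb0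
    _ ≤ |CA| * (n / b ^ p) + n * Real.exp (2 * (|CB| * n) / b ^ 2 - n * x / b) := by
        rw [← mul_div_assoc]
        gcongr
        · exact (hCA n).trans (by gcongr; exact le_abs_self CA)
        · exact (hCB n).trans (by gcongr; exact le_abs_self CB)
    _ ≤ |CA| * ((p / x) ^ p * Real.log n ^ p / n ^ (p - 1)) +
          Real.exp (8 * |CB| * p ^ 2 / x ^ 2) / Real.log 2 ^ p * Real.log n ^ p / n ^ (p - 1) := by
        rw [div_rpow_eq_of_eq_div_log (by linarith) hx hp0 hb]
        gcongr
        exact mul_exp_le_of_eq_div_log hn2 hx hp0 (abs_nonneg CB) hb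
    _ = _ := by ring
end

section
/- Let p ≥ 2 and let {X_i, i ≥ 1} be a sequence of NA random variables with E[X_i] = 0 for all i, such that V_n := Σ_{i=1}^n E[|X_i|^p] and B_n := Σ_{i=1}^n E[X_i²] are each bounded by a constant multiple of n. Then for any x > 0 there exists a positive constant C_x not depending on n such that for all n ≥ 1, P(|S_n| > nx) ≤ C_x / n^{p−1}. -/
open MeasureTheory Finset

/-!
Truncate at level `y = n x / (8 p)`. Off the event that some `|X_i|` exceeds `y`, whose
probability is at most `∑ E|X_i|^p / y^p = O(n^{1-p})` by Markov, `S_n` is the sum of the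
truncations `T_i`. As `E X_i = 0`, each `|E T_i| ≤ E|X_i|^p / y^{p-1}`, so for large `n` the means
add up to at most `n x / 2` and it remains to bound `P(∑ (T_i - E T_i) ≥ n x / 2)`. Negative
association gives `E ∏ f_i(X_i) ≤ ∏ E f_i(X_i)` for nonnegative nondecreasing `f_i`, so the
Chernoff bound goes through as for independent summands; with `λ = log n / (4 y)` and the
Bernstein-type bound `E e^{λ V} ≤ exp (λ² e^{2 λ y} E V² / 2)` for centred `|V| ≤ 2 y` it gives
`O(n^{-p})`. The lower tail is the upper tail of the NA sequence `-X_i`, and the finitely many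
small `n` are absorbed into the constant.
-/

open ProbabilityTheory Real

lemma Real.exp_le_one_add_add_sq_mul_exp {s c : ℝ} (hs : |s| ≤ c) :
    exp s ≤ 1 + s + s ^ 2 / 2 * exp c := by
  rcases eq_or_ne s 0 with rfl | hs0
  · simp
  obtain ⟨u, hu, h⟩ := taylor_mean_remainder_lagrange_iteratedDeriv (f := exp) (n := 1)
    hs0.symm contDiff_exp.contDiffOn
  have hd : derivWithin exp (Set.uIcc 0 s) 0 = 1 := by
    simpa using (hasDerivAt_exp 0).hasDerivWithinAt.derivWithin
      (uniqueDiffOn_uIcc hs0.symm _ Set.left_mem_uIcc)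
  have h2 : iteratedDeriv 2 exp = exp := by simp [iteratedDeriv_succ]
  simp only [taylor_within_apply, Finset.sum_range_succ, Finset.sum_range_zero, h2, hd,
    iteratedDerivWithin_zero, iteratedDerivWithin_one, Nat.factorial_zero, Nat.factorial_one,
    Nat.factorial_two, Nat.reduceAdd, Nat.cast_one, Nat.cast_ofNat, inv_one, sub_zero, pow_zero,
    pow_one, mul_one, one_mul, zero_add, smul_eq_mul, exp_zero] at h
  have hu_le : u ≤ c := by
    have := Set.uIoo_subset_uIcc_self hu
    rw [Set.mem_uIcc] at this
    rcases this with h' | h' <;> linarith [le_abs_self s, neg_abs_le s]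
  have : exp u * s ^ 2 / 2 ≤ s ^ 2 / 2 * exp c := by
    rw [mul_comm, mul_div_right_comm]
    exact mul_le_mul_of_nonneg_left (exp_le_exp.2 hu_le) (by positivity)
  linarith

def truncate (y r : ℝ) : ℝ := max (-y) (min r y)

lemma monotone_truncate (y : ℝ) : Monotone (truncate y) :=
  fun _ _ h => max_le_max le_rfl (min_le_min h le_rfl)

lemma continuous_truncate (y : ℝ) : Continuous (truncate y) := by
  unfold truncate; fun_prop

lemma abs_truncate_le {y : ℝ} (hy : 0 ≤ y) (r : ℝ) : |truncate y r| ≤ y :=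
  abs_le.2 ⟨le_max_left _ _, max_le (by linarith) (min_le_right _ _)⟩

lemma truncate_eq_self {y r : ℝ} (h : |r| ≤ y) : truncate y r = r := by
  rw [abs_le] at h
  rw [truncate, min_eq_left h.2, max_eq_right h.1]

lemma abs_truncate_le_abs {y : ℝ} (hy : 0 ≤ y) (r : ℝ) : |truncate y r| ≤ |r| := by
  rcases le_or_gt |r| y with h | h
  · rw [truncate_eq_self h]
  · exact (abs_truncate_le hy r).trans h.le

lemma abs_truncate_sub_le {y : ℝ} (hy : 0 ≤ y) (r : ℝ) : |truncate y r - r| ≤ |r| := by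
  unfold truncate
  rcases le_total r 0 with hr | hr
  · rw [abs_of_nonpos hr, abs_le]; constructor <;>
      cases max_cases (-y) (min r y) <;> cases min_cases r y <;> linarith
  · rw [abs_of_nonneg hr, abs_le]; constructor <;>
      cases max_cases (-y) (min r y) <;> cases min_cases r y <;> linarith

lemma abs_truncate_sub_mul_rpow_le {y : ℝ} (hy : 0 < y) {p : ℝ} (hp : 1 ≤ p) (r : ℝ) :
    |truncate y r - r| * y ^ (p - 1) ≤ |r| ^ p := by
  rcases le_or_gt |r| y with h | h
  · rw [truncate_eq_self h]; simp only [sub_self, abs_zero, zero_mul]; positivity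
  · calc |truncate y r - r| * y ^ (p - 1) ≤ |r| * |r| ^ (p - 1) :=
          mul_le_mul (abs_truncate_sub_le hy.le r) (rpow_le_rpow hy.le h.le (by linarith))
            (by positivity) (abs_nonneg r)
      _ = |r| ^ p := by
          rw [← rpow_one_add' (abs_nonneg r) (by linarith), add_sub_cancel]

lemma setOf_lt_pSum_subset {Ω : Type*} (X : ℕ → Ω → ℝ) (n : ℕ) {y t b : ℝ} (m : ℕ → ℝ)
    (hm : ∑ i ∈ Icc 1 n, m i + t ≤ b) :
    {ω | b < pSum X n ω} ⊆
      (⋃ i ∈ Icc 1 n, {ω | y < |X i ω|}) ∪ {ω | t ≤ ∑ i ∈ Icc 1 n, (truncate y (X i ω) - m i)} := by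
  intro ω hω
  by_cases h : ∃ i ∈ Icc 1 n, y < |X i ω|
  · left; simpa using h
  · right
    simp only [not_exists, not_and, not_lt] at h
    have : pSum X n ω = ∑ i ∈ Icc 1 n, truncate y (X i ω) :=
      sum_congr rfl fun i hi => (truncate_eq_self (h i hi)).symm
    simp only [Set.mem_ofPred_eq, sum_sub_distrib] at hω ⊢
    linarith

lemma log_sq_mul_sqrt_le {N : ℝ} (hN : 1 ≤ N) : log N ^ 2 * √N ≤ 16 * N := by
  have hN0 : 0 ≤ N := by linarith
  have h4 : log N ≤ 4 * N ^ (1 / 4 : ℝ) := by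
    have := log_le_rpow_div hN0 (by norm_num : (0 : ℝ) < 1 / 4)
    linarith [show N ^ (1 / 4 : ℝ) / (1 / 4) = 4 * N ^ (1 / 4 : ℝ) by ring]
  have hsq : log N ^ 2 ≤ 16 * √N := by
    calc log N ^ 2 ≤ (4 * N ^ (1 / 4 : ℝ)) ^ 2 := pow_le_pow_left₀ (log_nonneg hN) h4 2
      _ = 16 * √N := by
        rw [mul_pow, ← rpow_mul_natCast hN0, sqrt_eq_rpow]; norm_num
  calc log N ^ 2 * √N ≤ 16 * √N * √N := mul_le_mul_of_nonneg_right hsq (sqrt_nonneg _)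
    _ = 16 * N := by rw [mul_assoc, mul_self_sqrt hN0]

lemma div_mul_rpow_le {S C N a p : ℝ} (hN : 0 < N) (ha : 0 < a) (hS : S ≤ C * N) :
    S / (N * a) ^ p ≤ C / a ^ p / N ^ (p - 1) := by
  calc S / (N * a) ^ p ≤ C * N / (N * a) ^ p := div_le_div_of_nonneg_right hS (by positivity)
    _ = C / a ^ p / N ^ (p - 1) := by
        rw [mul_rpow hN.le ha.le, rpow_sub_one hN.ne']
        field_simp

lemma chernoff_exponent_le {N x p y l B : ℝ} (hN : 1 ≤ N) (hx : 0 < x) (hp : 0 < p)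
    (hB : 0 ≤ B) (hy : y = N * (x / (8 * p))) (hl : l = log N / (4 * y)) :
    exp (-l * (N * x / 2) + l ^ 2 * exp (l * (2 * y)) / 2 * (B * N)) ≤
      exp (32 * p ^ 2 * B / x ^ 2) / N ^ (p - 1) := by
  have hN0 : 0 < N := by linarith
  have hlt : l * (N * x / 2) = p * log N := by
    rw [hl, hy]; field_simp; ring
  have hly : exp (l * (2 * y)) = √N := by
    rw [hl, hy, sqrt_eq_rpow, rpow_def_of_pos hN0]; congr 1; field_simp; ring
  have hquad : l ^ 2 * exp (l * (2 * y)) / 2 * (B * N) ≤ 32 * p ^ 2 * B / x ^ 2 := by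
    have : l ^ 2 * exp (l * (2 * y)) / 2 * (B * N) =
        2 * p ^ 2 * B / (N * x ^ 2) * (log N ^ 2 * √N) := by
      rw [hly, hl, hy]; field_simp; ring
    rw [this]
    calc 2 * p ^ 2 * B / (N * x ^ 2) * (log N ^ 2 * √N) ≤ 2 * p ^ 2 * B / (N * x ^ 2) * (16 * N) :=
          mul_le_mul_of_nonneg_left (log_sq_mul_sqrt_le hN) (by positivity)
      _ = 32 * p ^ 2 * B / x ^ 2 := by field_simp; ring
  calc exp (-l * (N * x / 2) + l ^ 2 * exp (l * (2 * y)) / 2 * (B * N))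
      ≤ exp (32 * p ^ 2 * B / x ^ 2) * exp (-(p * log N)) := by
        rw [← exp_add]; exact exp_le_exp.2 (by rw [neg_mul, hlt]; linarith)
    _ = exp (32 * p ^ 2 * B / x ^ 2) / N ^ p := by
        rw [exp_neg, ← div_eq_mul_inv, rpow_def_of_pos hN0, mul_comm p]
    _ ≤ exp (32 * p ^ 2 * B / x ^ 2) / N ^ (p - 1) :=
        div_le_div_of_nonneg_left (exp_pos _).le (by positivity)
          (rpow_le_rpow_of_exponent_le hN (by linarith))

lemma exists_forall_le_div_rpow_of_eventually {a : ℕ → ℝ} {q C : ℝ} (hq : 0 ≤ q)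
    (ha : ∀ n, a n ≤ 1) (h : ∀ᶠ n : ℕ in Filter.atTop, a n ≤ C / n ^ q) :
    ∃ C' : ℝ, 0 < C' ∧ ∀ n : ℕ, 1 ≤ n → a n ≤ C' / n ^ q := by
  obtain ⟨N, hN⟩ := Filter.eventually_atTop.1 h
  have hN0 : 0 ≤ (N : ℝ) ^ q := by positivity
  refine ⟨max C 0 + N ^ q + 1, by positivity, fun n hn => ?_⟩
  have hn0 : 0 < (n : ℝ) ^ q := rpow_pos_of_pos (Nat.cast_pos.2 hn) q
  rcases le_or_gt N n with hNn | hnN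
  · exact (hN n hNn).trans (div_le_div_of_nonneg_right (by linarith [le_max_left C 0]) hn0.le)
  · rw [le_div_iff₀ hn0]
    have : (n : ℝ) ^ q ≤ N ^ q := rpow_le_rpow (by positivity) (by exact_mod_cast hnN.le) hq
    nlinarith [ha n, le_max_right C 0]

section

variable {Ω : Type*} [MeasurableSpace Ω] {μ : Measure Ω} {X : ℕ → Ω → ℝ}

namespace NegAssoc

lemma neg (h : NegAssoc μ X) : NegAssoc μ (fun i ω => -X i ω) := by
  intro A₁ A₂ h₁ h₂ hd f₁ f₂ hf₁ hf₂ I₁ I₂ I₁₂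
  have := h A₁ A₂ h₁ h₂ hd (fun v => -f₁ (-v)) (fun v => -f₂ (-v))
    (fun _ _ hvw => neg_le_neg (hf₁ (neg_le_neg hvw)))
    (fun _ _ hvw => neg_le_neg (hf₂ (neg_le_neg hvw)))
    I₁.neg I₂.neg (by simp only [neg_mul_neg]; exact I₁₂)
  simpa only [Pi.neg_def, neg_neg, neg_mul_neg, integral_neg] using this

end NegAssoc

variable [IsProbabilityMeasure μ]

lemma mgf_le_exp_of_abs_le {V : Ω → ℝ} (hV : AEStronglyMeasurable V μ) {c : ℝ}
    (hVc : ∀ ω, |V ω| ≤ c) (hmean : μ[V] = 0) {t : ℝ} (ht : 0 ≤ t) :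
    mgf V μ t ≤ exp (t ^ 2 * exp (t * c) / 2 * ∫ ω, V ω ^ 2 ∂μ) := by
  have hV_int : Integrable V μ := .of_bound hV c (.of_forall hVc)
  have hV2_int : Integrable (fun ω => V ω ^ 2) μ :=
    .of_bound (hV.pow 2) (c ^ 2) (.of_forall fun ω => by
      simpa [abs_pow] using pow_le_pow_left₀ (abs_nonneg _) (hVc ω) 2)
  have hexp_int : Integrable (fun ω => exp (t * V ω)) μ :=
    .of_bound (continuous_exp.comp_aestronglyMeasurable (hV.const_mul t)) (exp (t * c))
      (.of_forall fun ω => by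
        rw [Real.norm_eq_abs, abs_exp]
        exact exp_le_exp.2 ((le_abs_self _).trans (by
          rw [abs_mul, abs_of_nonneg ht]; exact mul_le_mul_of_nonneg_left (hVc ω) ht)))
  have hq_int : Integrable (fun ω => t ^ 2 * exp (t * c) / 2 * V ω ^ 2) μ := hV2_int.const_mul _
  have hl_int : Integrable (fun ω => 1 + t * V ω) μ := (integrable_const 1).add (hV_int.const_mul t)
  calc mgf V μ t ≤ ∫ ω, (1 + t * V ω + t ^ 2 * exp (t * c) / 2 * V ω ^ 2) ∂μ := by
        refine integral_mono hexp_int (hl_int.add hq_int)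
          fun ω => (exp_le_one_add_add_sq_mul_exp ?_).trans_eq (by ring)
        rw [abs_mul, abs_of_nonneg ht]; exact mul_le_mul_of_nonneg_left (hVc ω) ht
    _ = 1 + t ^ 2 * exp (t * c) / 2 * ∫ ω, V ω ^ 2 ∂μ := by
        rw [integral_add hl_int hq_int, integral_add (integrable_const 1) (hV_int.const_mul t),
          integral_const_mul, integral_const_mul, hmean]
        simp
    _ ≤ _ := by linarith [add_one_le_exp (t ^ 2 * exp (t * c) / 2 * ∫ ω, V ω ^ 2 ∂μ)]

lemma variance_truncate_le {X : Ω → ℝ} (hX : AEStronglyMeasurable X μ)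
    (hX2 : Integrable (fun ω => X ω ^ 2) μ) {y : ℝ} (hy : 0 ≤ y) :
    Var[fun ω => truncate y (X ω); μ] ≤ ∫ ω, X ω ^ 2 ∂μ :=
  (variance_le_expectation_sq ((continuous_truncate y).comp_aestronglyMeasurable hX)).trans <|
    integral_mono_of_nonneg (.of_forall fun ω => sq_nonneg _) hX2 (.of_forall fun ω => by
      simpa only [Pi.pow_apply, sq_abs] using
        pow_le_pow_left₀ (abs_nonneg _) (abs_truncate_le_abs hy (X ω)) 2)

lemma abs_integral_truncate_mul_rpow_le {X : Ω → ℝ} (hX : Integrable X μ) (hmean : μ[X] = 0)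
    {p : ℝ} (hp : 1 ≤ p) (hXp : Integrable (fun ω => |X ω| ^ p) μ) {y : ℝ} (hy : 0 < y) :
    |μ[fun ω => truncate y (X ω)]| * y ^ (p - 1) ≤ ∫ ω, |X ω| ^ p ∂μ := by
  have hT : Integrable (fun ω => truncate y (X ω)) μ :=
    .of_bound ((continuous_truncate y).comp_aestronglyMeasurable hX.1) y
      (.of_forall fun ω => abs_truncate_le hy.le _)
  have hmean' : μ[fun ω => truncate y (X ω)] = ∫ ω, (truncate y (X ω) - X ω) ∂μ := by
    rw [integral_sub hT hX, hmean, sub_zero]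
  calc |μ[fun ω => truncate y (X ω)]| * y ^ (p - 1)
      ≤ (∫ ω, |truncate y (X ω) - X ω| ∂μ) * y ^ (p - 1) := by
        rw [hmean']
        exact mul_le_mul_of_nonneg_right (abs_integral_le_integral_abs) (by positivity)
    _ = ∫ ω, |truncate y (X ω) - X ω| * y ^ (p - 1) ∂μ := (integral_mul_const _ _).symm
    _ ≤ ∫ ω, |X ω| ^ p ∂μ :=
        integral_mono ((hT.sub hX).abs.mul_const _) hXp
          fun ω => abs_truncate_sub_mul_rpow_le hy hp (X ω)

lemma measureReal_biUnion_lt_abs_le {X : ℕ → Ω → ℝ} {s : Finset ℕ} {p y : ℝ} (hp : 0 < p)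
    (hy : 0 < y) (hXp : ∀ i ∈ s, Integrable (fun ω => |X i ω| ^ p) μ) :
    μ.real (⋃ i ∈ s, {ω | y < |X i ω|}) ≤ (∑ i ∈ s, ∫ ω, |X i ω| ^ p ∂μ) / y ^ p := by
  rw [le_div_iff₀ (by positivity)]
  refine (mul_le_mul_of_nonneg_right (measureReal_biUnion_finset_le _ _) (by positivity)).trans ?_
  rw [Finset.sum_mul]
  refine Finset.sum_le_sum fun i hi => ?_
  calc μ.real {ω | y < |X i ω|} * y ^ p ≤ y ^ p * μ.real {ω | y ^ p ≤ |X i ω| ^ p} := by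
        rw [mul_comm]
        exact mul_le_mul_of_nonneg_left (measureReal_mono fun ω hω =>
          rpow_le_rpow hy.le (le_of_lt hω) hp.le) (by positivity)
    _ ≤ ∫ ω, |X i ω| ^ p ∂μ :=
        mul_meas_ge_le_integral_of_nonneg (.of_forall fun ω => by positivity) (hXp i hi) _

lemma integrable_prod_of_nonneg_of_le {ι : Type*} {f : ι → Ω → ℝ} (hf : ∀ i, Measurable (f i))
    (hf0 : ∀ i ω, 0 ≤ f i ω) {M : ℝ} (hfM : ∀ i ω, f i ω ≤ M) (s : Finset ι) :
    Integrable (fun ω => ∏ i ∈ s, f i ω) μ :=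
  .of_bound (Finset.measurable_prod _ fun i _ => hf i).aestronglyMeasurable (M ^ s.card)
    (.of_forall fun ω => by
      rw [Real.norm_eq_abs, abs_of_nonneg (prod_nonneg fun i _ => hf0 i ω)]
      exact (prod_le_prod (fun i _ => hf0 i ω) fun i _ => hfM i ω).trans_eq (prod_const M))

namespace NegAssoc

lemma integral_prod_le_s8 (hNA : NegAssoc μ X) (hX : ∀ i, Measurable (X i)) {s : Finset ℕ}
    (hs : ∀ i ∈ s, 1 ≤ i) {g : ℕ → ℝ → ℝ} (hg : ∀ i, Monotone (g i)) (hg0 : ∀ i r, 0 ≤ g i r)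
    {M : ℝ} (hgM : ∀ i r, g i r ≤ M) :
    ∫ ω, ∏ i ∈ s, g i (X i ω) ∂μ ≤ ∏ i ∈ s, ∫ ω, g i (X i ω) ∂μ := by
  induction s using Finset.induction_on with
  | empty => simp
  | insert a s ha ih =>
    have hs' : ∀ i ∈ s, 1 ≤ i := fun i hi => hs i (mem_insert_of_mem hi)
    have hmeas : ∀ i, Measurable fun ω => g i (X i ω) := fun i => (hg i).measurable.comp (hX i)
    have hint : ∀ s : Finset ℕ, Integrable (fun ω => ∏ i ∈ s, g i (X i ω)) μ :=
      integrable_prod_of_nonneg_of_le hmeas (fun i _ => hg0 i _) (fun i _ => hgM i _)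
    have hga_int : Integrable (fun ω => g a (X a ω)) μ := by simpa using hint {a}
    have hmul_int : Integrable (fun ω => (∏ i ∈ s, g i (X i ω)) * g a (X a ω)) μ := by
      simpa only [prod_insert ha, mul_comm] using hint (insert a s)
    have hattach : ∀ ω, ∏ i ∈ s.attach, g i (X i ω) = ∏ i ∈ s, g i (X i ω) :=
      fun ω => prod_attach s fun i => g i (X i ω)
    have key := hNA s {a} hs' (by simpa using hs a (mem_insert_self a s))
      (disjoint_singleton_right.2 ha) (fun v => ∏ i ∈ s.attach, g i (v i))
      (fun v => g a (v ⟨a, mem_singleton_self a⟩))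
      (fun v w h => prod_le_prod (fun i _ => hg0 _ _) fun i _ => hg i (h i))
      (fun v w h => hg a (h _)) (by simpa only [hattach] using hint s) hga_int
      (by simpa only [hattach] using hmul_int)
    simp only [hattach] at key
    simp_rw [prod_insert ha, mul_comm (g a _)]
    rw [mul_comm (∫ ω, g a (X a ω) ∂μ)]
    exact key.trans (mul_le_mul_of_nonneg_right (ih hs') (integral_nonneg fun ω => hg0 a _))

lemma measureReal_le_sum_sub_integral_le (hNA : NegAssoc μ X) (hX : ∀ i, Measurable (X i))
    {s : Finset ℕ} (hs : ∀ i ∈ s, 1 ≤ i) {g : ℝ → ℝ} (hg : Monotone g) {y : ℝ}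
    (hgy : ∀ r, |g r| ≤ y) (t : ℝ) {l : ℝ} (hl : 0 ≤ l) :
    μ.real {ω | t ≤ ∑ i ∈ s, (g (X i ω) - μ[fun ω => g (X i ω)])} ≤
      exp (-l * t + l ^ 2 * exp (l * (2 * y)) / 2 * ∑ i ∈ s, Var[fun ω => g (X i ω); μ]) := by
  set m : ℕ → ℝ := fun i => μ[fun ω => g (X i ω)]
  set V : ℕ → Ω → ℝ := fun i ω => g (X i ω) - m i
  have hgX : ∀ i, Measurable fun ω => g (X i ω) := fun i => hg.measurable.comp (hX i)
  have hm : ∀ i, |m i| ≤ y := fun i => by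
    simpa using norm_integral_le_of_norm_le_const (μ := μ) (f := fun ω => g (X i ω))
      (.of_forall fun ω => hgy (X i ω))
  have hV : ∀ i ω, |V i ω| ≤ 2 * y := fun i ω =>
    (abs_sub _ _).trans (by linarith [hgy (X i ω), hm i])
  have hVmeas : ∀ i, Measurable (V i) := fun i => (hgX i).sub_const _
  have hVmean : ∀ i, μ[V i] = 0 := fun i => by
    rw [integral_sub (.of_bound (hgX i).aestronglyMeasurable y (.of_forall fun ω => hgy _))
      (integrable_const _)]
    simp [m]
  have hexp_mono : ∀ i, Monotone fun r => exp (l * (g r - m i)) := fun i _ _ h =>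
    exp_le_exp.2 (mul_le_mul_of_nonneg_left (sub_le_sub_right (hg h) _) hl)
  have hexp_le : ∀ i r, exp (l * (g r - m i)) ≤ exp (l * (2 * y)) := fun i r =>
    exp_le_exp.2 (mul_le_mul_of_nonneg_left ((le_abs_self _).trans
      ((abs_sub _ _).trans (by linarith [hgy r, hm i]))) hl)
  have hexp_sum : ∀ ω, exp (l * ∑ i ∈ s, V i ω) = ∏ i ∈ s, exp (l * (g (X i ω) - m i)) :=
    fun ω => by rw [mul_sum, exp_sum]
  have hT_int : Integrable (fun ω => exp (l * ∑ i ∈ s, V i ω)) μ := by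
    simp only [hexp_sum]
    exact integrable_prod_of_nonneg_of_le (f := fun i ω => exp (l * (g (X i ω) - m i)))
      (fun i => (hexp_mono i).measurable.comp (hX i)) (fun _ _ => (exp_pos _).le)
      (fun i _ => hexp_le i _) s
  calc μ.real {ω | t ≤ ∑ i ∈ s, V i ω}
      ≤ exp (-l * t) * mgf (fun ω => ∑ i ∈ s, V i ω) μ l := measure_ge_le_exp_mul_mgf t hl hT_int
    _ ≤ exp (-l * t) * ∏ i ∈ s, mgf (V i) μ l := by
        refine mul_le_mul_of_nonneg_left ?_ (exp_pos _).le
        simp only [mgf, hexp_sum]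
        exact hNA.integral_prod_le_s8 hX hs hexp_mono (fun i r => (exp_pos _).le) hexp_le
    _ ≤ exp (-l * t) *
          ∏ i ∈ s, exp (l ^ 2 * exp (l * (2 * y)) / 2 * Var[fun ω => g (X i ω); μ]) := by
        refine mul_le_mul_of_nonneg_left (prod_le_prod (fun i _ => mgf_nonneg) fun i _ => ?_)
          (exp_pos _).le
        rw [variance_eq_integral (hgX i).aemeasurable]
        exact mgf_le_exp_of_abs_le (hVmeas i).aestronglyMeasurable (hV i) (hVmean i) hl
    _ = _ := by rw [← exp_sum, ← exp_add, ← mul_sum]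

end NegAssoc

lemma sum_integral_truncate_add_le (hint : ∀ i, 1 ≤ i → Integrable (X i) μ)
    (hmean : ∀ i, 1 ≤ i → ∫ ω, X i ω ∂μ = 0) {p : ℝ} (hp : 1 ≤ p)
    (hV : ∀ i, 1 ≤ i → Integrable (fun ω => |X i ω| ^ p) μ) {n : ℕ} {CV x : ℝ} (hx : 0 < x)
    (hCV : ∑ i ∈ Icc 1 n, ∫ ω, |X i ω| ^ p ∂μ ≤ CV * n) {y : ℝ} (hy : 0 < y)
    (hbias : 2 * CV / x ≤ y ^ (p - 1)) :
    ∑ i ∈ Icc 1 n, μ[fun ω => truncate y (X i ω)] + n * x / 2 ≤ n * x := by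
  have hsum : (∑ i ∈ Icc 1 n, |μ[fun ω => truncate y (X i ω)]|) * y ^ (p - 1) ≤
      n * x / 2 * y ^ (p - 1) := by
    rw [sum_mul]
    calc ∑ i ∈ Icc 1 n, |μ[fun ω => truncate y (X i ω)]| * y ^ (p - 1)
        ≤ ∑ i ∈ Icc 1 n, ∫ ω, |X i ω| ^ p ∂μ :=
          sum_le_sum fun i hi => abs_integral_truncate_mul_rpow_le (hint i (mem_Icc.1 hi).1)
            (hmean i (mem_Icc.1 hi).1) hp (hV i (mem_Icc.1 hi).1) hy
      _ ≤ CV * n := hCV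
      _ ≤ n * x / 2 * y ^ (p - 1) := by
          nlinarith [mul_le_mul_of_nonneg_left ((div_le_iff₀ hx).1 hbias) n.cast_nonneg]
  linarith [le_of_mul_le_mul_right hsum (by positivity),
    sum_le_sum fun i (_ : i ∈ Icc 1 n) => le_abs_self (μ[fun ω => truncate y (X i ω)])]

lemma measureReal_lt_pSum_le (hmeas : ∀ i, Measurable (X i)) (hNA : NegAssoc μ X)
    (hint : ∀ i, 1 ≤ i → Integrable (X i) μ) (hmean : ∀ i, 1 ≤ i → ∫ ω, X i ω ∂μ = 0)
    {p : ℝ} (hp : 1 < p) (hV : ∀ i, 1 ≤ i → Integrable (fun ω => |X i ω| ^ p) μ)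
    (hB : ∀ i, 1 ≤ i → Integrable (fun ω => X i ω ^ 2) μ) {n : ℕ} (hn : 1 ≤ n) {CV CB : ℝ}
    (hCV : ∑ i ∈ Icc 1 n, ∫ ω, |X i ω| ^ p ∂μ ≤ CV * n)
    (hCB : ∑ i ∈ Icc 1 n, ∫ ω, X i ω ^ 2 ∂μ ≤ CB * n) {x : ℝ} (hx : 0 < x)
    (hbias : 2 * CV / x ≤ (n * (x / (8 * p))) ^ (p - 1)) :
    μ.real {ω | n * x < pSum X n ω} ≤
      (CV / (x / (8 * p)) ^ p + exp (32 * p ^ 2 * CB / x ^ 2)) / n ^ (p - 1) := by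
  set N : ℝ := (n : ℝ)
  have hN : 1 ≤ N := Nat.one_le_cast.2 hn
  have hp0 : 0 < p := by linarith
  set y := N * (x / (8 * p))
  have hy : 0 < y := by positivity
  set m : ℕ → ℝ := fun i => μ[fun ω => truncate y (X i ω)]
  have hCB0 : 0 ≤ CB := by
    have : 0 ≤ ∑ i ∈ Icc 1 n, ∫ ω, X i ω ^ 2 ∂μ :=
      sum_nonneg fun i _ => integral_nonneg fun ω => sq_nonneg _
    nlinarith
  have hm : ∑ i ∈ Icc 1 n, m i + N * x / 2 ≤ N * x :=
    sum_integral_truncate_add_le hint hmean hp.le hV hx hCV hy hbias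
  have hvar : ∑ i ∈ Icc 1 n, Var[fun ω => truncate y (X i ω); μ] ≤ CB * N :=
    (sum_le_sum fun i hi => variance_truncate_le (hmeas i).aestronglyMeasurable
      (hB i (mem_Icc.1 hi).1) hy.le).trans hCB
  calc μ.real {ω | N * x < pSum X n ω}
      ≤ μ.real (⋃ i ∈ Icc 1 n, {ω | y < |X i ω|}) +
          μ.real {ω | N * x / 2 ≤ ∑ i ∈ Icc 1 n, (truncate y (X i ω) - m i)} :=
        (measureReal_mono (setOf_lt_pSum_subset X n m hm)).trans (measureReal_union_le _ _)
    _ ≤ _ := add_le_add (measureReal_biUnion_lt_abs_le hp0 hy fun i hi => hV i (mem_Icc.1 hi).1)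
          (hNA.measureReal_le_sum_sub_integral_le hmeas (fun i hi => (mem_Icc.1 hi).1)
            (monotone_truncate y) (abs_truncate_le hy.le) _ (l := log N / (4 * y)) (by positivity))
    _ ≤ CV / (x / (8 * p)) ^ p / N ^ (p - 1) + exp (32 * p ^ 2 * CB / x ^ 2) / N ^ (p - 1) := by
        refine add_le_add (div_mul_rpow_le (by positivity) (by positivity) hCV)
          ((exp_le_exp.2 ?_).trans (chernoff_exponent_le hN hx hp0 hCB0 rfl rfl))
        gcongr
    _ = _ := by rw [add_div]

lemma eventually_measureReal_lt_pSum_le (hmeas : ∀ i, Measurable (X i)) (hNA : NegAssoc μ X)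
    (hint : ∀ i, 1 ≤ i → Integrable (X i) μ) (hmean : ∀ i, 1 ≤ i → ∫ ω, X i ω ∂μ = 0)
    {p : ℝ} (hp : 1 < p) (hV : ∀ i, 1 ≤ i → Integrable (fun ω => |X i ω| ^ p) μ)
    (hB : ∀ i, 1 ≤ i → Integrable (fun ω => X i ω ^ 2) μ) {CV CB : ℝ}
    (hCV : ∀ n : ℕ, ∑ i ∈ Icc 1 n, ∫ ω, |X i ω| ^ p ∂μ ≤ CV * n)
    (hCB : ∀ n : ℕ, ∑ i ∈ Icc 1 n, ∫ ω, X i ω ^ 2 ∂μ ≤ CB * n) {x : ℝ} (hx : 0 < x) :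
    ∃ C : ℝ, ∀ᶠ n : ℕ in Filter.atTop, μ.real {ω | n * x < pSum X n ω} ≤ C / n ^ (p - 1) := by
  have hy : Filter.Tendsto (fun n : ℕ => ((n : ℝ) * (x / (8 * p))) ^ (p - 1)) .atTop .atTop :=
    (tendsto_rpow_atTop (by linarith)).comp
      (tendsto_natCast_atTop_atTop.atTop_mul_const (by positivity))
  exact ⟨_, by
    filter_upwards [hy.eventually_ge_atTop (2 * CV / x), Filter.eventually_ge_atTop 1]
      with n hbias hn
    exact measureReal_lt_pSum_le hmeas hNA hint hmean hp hV hB hn (hCV n) (hCB n) hx hbias⟩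

end

/-- Remark after Proposition 2.3: for `p ≥ 2` and centered NA random variables whose
`V_n = ∑_{i=1}^n E[|X_i|^p]` and `B_n = ∑_{i=1}^n E[X_i²]` grow at most linearly in `n`,
for any `x > 0` there is `C_x > 0` independent of `n` with
`P(|S_n| > nx) ≤ C_x / n^{p−1}` for all `n ≥ 1`. -/
theorem stmt8 {Ω : Type*} [MeasurableSpace Ω] (μ : Measure Ω) [IsProbabilityMeasure μ]
    (X : ℕ → Ω → ℝ) (hmeas : ∀ i, Measurable (X i)) (hNA : NegAssoc μ X)
    (hint : ∀ i, 1 ≤ i → Integrable (X i) μ)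
    (hmean : ∀ i, 1 ≤ i → ∫ ω, X i ω ∂μ = 0)
    (p : ℝ) (hp : 2 ≤ p)
    (hV : ∀ i, 1 ≤ i → Integrable (fun ω => |X i ω| ^ p) μ)
    (hB : ∀ i, 1 ≤ i → Integrable (fun ω => X i ω ^ 2) μ)
    (CV CB : ℝ)
    (hCV : ∀ n : ℕ, (∑ i ∈ Finset.Icc 1 n, ∫ ω, |X i ω| ^ p ∂μ) ≤ CV * n)
    (hCB : ∀ n : ℕ, (∑ i ∈ Finset.Icc 1 n, ∫ ω, X i ω ^ 2 ∂μ) ≤ CB * n)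
    (x : ℝ) (hx : 0 < x) :
    ∃ C : ℝ, 0 < C ∧ ∀ n : ℕ, 1 ≤ n →
      (μ {ω | (n : ℝ) * x < |pSum X n ω|}).toReal ≤ C / (n : ℝ) ^ (p - 1) := by
  have hp1 : 1 < p := by linarith
  obtain ⟨C₁, h₁⟩ := eventually_measureReal_lt_pSum_le hmeas hNA hint hmean hp1 hV hB hCV hCB hx
  obtain ⟨C₂, h₂⟩ := eventually_measureReal_lt_pSum_le (fun i => (hmeas i).neg) hNA.neg
    (fun i hi => (hint i hi).neg) (by simpa [integral_neg] using hmean) hp1 (by simpa using hV)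
    (by simpa using hB) (by simpa using hCV) (by simpa using hCB) hx
  refine exists_forall_le_div_rpow_of_eventually (q := p - 1) (C := C₁ + C₂) (by linarith)
    (fun n => measureReal_le_one) ?_
  filter_upwards [h₁, h₂] with n hn₁ hn₂
  have hsplit : {ω | (n : ℝ) * x < |pSum X n ω|} ⊆
      {ω | n * x < pSum X n ω} ∪ {ω | n * x < pSum (fun i ω => -X i ω) n ω} := fun ω hω => by
    simpa [pSum, sum_neg_distrib] using lt_abs.1 hω
  calc μ.real {ω | (n : ℝ) * x < |pSum X n ω|}
      ≤ C₁ / n ^ (p - 1) + C₂ / n ^ (p - 1) :=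
        ((measureReal_mono hsplit).trans (measureReal_union_le _ _)).trans (add_le_add hn₁ hn₂)
    _ = (C₁ + C₂) / n ^ (p - 1) := (add_div _ _ _).symm
end

section
/- Let p ∈ (0,1) and let {X_i, i ≥ 1} be a sequence of NA random variables with E[X_i] = 0 for all i, such that K_n := Σ_{i=1}^n E[X_i² exp{|X_i|^p}] satisfies 1 ≤ K_n ≤ Cn for all n for some constant C ≥ 1. Then for any 0 < α < 1 there exists a positive constant c, not depending on n, such that for any x > 0 and all sufficiently large n, P(max_{1≤k≤n} S_k ≥ nx) ≤ 2(1 − α)^{−1} exp{ −c α^p x^p n^p }. -/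
open MeasureTheory Finset

/-! Truncate at level `b = α x n`. On the event `max_{k ≤ n} S_k ≥ n x`, either some `X_i`
exceeds `b`, which by Markov's inequality for `X² exp |X|^p` has probability at most
`K_n / (b² e^{b^p})`, or some partial sum of the truncated variables `min (X_i, b)` reaches
`n x`. Truncation is monotone, so negative association bounds the exponential moment of a
truncated sum by the product of the individual ones. For `t = b^{p-1}` one has
`t · min (x, b) ≤ |x|^p`, hence `E e^{t min (X_i, b)} ≤ 1 + t² E[X_i² e^{|X_i|^p}]`, and
Chernoff's bound leaves `n · exp (t² C n - b^p / α)`. For large `n` both terms are at most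
`exp (-b^p / 4)`. -/

open Real Filter ProbabilityTheory

lemma exp_le_one_add_add_sq_mul_exp {u M : ℝ} (hu : u ≤ M) (hM : 0 ≤ M) :
    exp u ≤ 1 + u + u ^ 2 * exp M := by
  have hexp_neg : 1 - u ≤ exp (-u) := by linarith [add_one_le_exp (-u)]
  have hmul : exp u * exp (-u) = 1 := by rw [← exp_add, add_neg_cancel, exp_zero]
  rcases le_total u 0 with hu0 | hu0
  · have : exp u ≤ 1 + u + u ^ 2 := by nlinarith [exp_pos u, exp_pos (-u)]
    nlinarith [one_le_exp hM]
  · have : exp u ≤ 1 + u + u ^ 2 * exp u := by nlinarith [exp_pos u, exp_pos (-u)]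
    nlinarith [exp_le_exp.2 hu]

lemma mul_min_le_abs_rpow {t x b p : ℝ} (hp0 : 0 ≤ p) (hp1 : p ≤ 1) (ht : 0 ≤ t)
    (htb : t ≤ b ^ (p - 1)) : t * min x b ≤ |x| ^ p := by
  rcases le_or_gt (min x b) 0 with hy | hy
  · exact (mul_nonpos_of_nonneg_of_nonpos ht hy).trans (rpow_nonneg (abs_nonneg x) p)
  calc t * min x b ≤ b ^ (p - 1) * min x b := by gcongr
    _ ≤ min x b ^ (p - 1) * min x b := by
        gcongr ?_ * _
        exact rpow_le_rpow_of_nonpos hy (min_le_right x b) (by linarith)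
    _ = min x b ^ p := by rw [← rpow_add_one hy.ne', sub_add_cancel]
    _ ≤ |x| ^ p := by gcongr; exact (min_le_left x b).trans (le_abs_self x)

lemma exp_mul_min_le {t x b p : ℝ} (hp0 : 0 ≤ p) (hp1 : p ≤ 1) (hb : 0 ≤ b) (ht : 0 ≤ t)
    (htb : t ≤ b ^ (p - 1)) :
    exp (t * min x b) ≤ 1 + t * min x b + t ^ 2 * (x ^ 2 * exp (|x| ^ p)) := by
  have hsq : min x b ^ 2 ≤ x ^ 2 := by
    rcases le_total x b with hxb | hxb
    · rw [min_eq_left hxb]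
    · rw [min_eq_right hxb]
      exact pow_le_pow_left₀ hb hxb 2
  calc exp (t * min x b)
      ≤ 1 + t * min x b + (t * min x b) ^ 2 * exp (|x| ^ p) :=
        exp_le_one_add_add_sq_mul_exp (mul_min_le_abs_rpow hp0 hp1 ht htb)
          (rpow_nonneg (abs_nonneg x) p)
    _ ≤ 1 + t * min x b + t ^ 2 * (x ^ 2 * exp (|x| ^ p)) := by
        rw [mul_pow, mul_assoc]
        gcongr

section

variable {Ω : Type*} [MeasurableSpace Ω] {μ : Measure Ω} {X : ℕ → Ω → ℝ} {f : ℝ → ℝ}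

lemma integrable_prod_comp_of_monotone [IsFiniteMeasure μ] (hX : ∀ i, Measurable (X i))
    (hf : Monotone f) (hf0 : 0 ≤ f) {M : ℝ} (hfM : ∀ x, f x ≤ M) (s : Finset ℕ) :
    Integrable (fun ω => ∏ i ∈ s, f (X i ω)) μ := by
  refine .of_bound (C := M ^ s.card) ?_ (ae_of_all _ fun ω => ?_)
  · exact (Finset.measurable_prod s fun i _ => hf.measurable.comp (hX i)).aestronglyMeasurable
  · rw [Real.norm_of_nonneg (Finset.prod_nonneg fun i _ => hf0 _), ← Finset.prod_const]
    exact Finset.prod_le_prod (fun i _ => hf0 _) fun i _ => hfM _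

theorem NegAssoc.integral_prod_le_prod_integral [IsProbabilityMeasure μ] (hNA : NegAssoc μ X)
    (hX : ∀ i, Measurable (X i)) (hf : Monotone f) (hf0 : 0 ≤ f) {M : ℝ} (hfM : ∀ x, f x ≤ M)
    (s : Finset ℕ) (hs : ∀ i ∈ s, 1 ≤ i) :
    ∫ ω, ∏ i ∈ s, f (X i ω) ∂μ ≤ ∏ i ∈ s, ∫ ω, f (X i ω) ∂μ := by
  induction s using Finset.induction_on with
  | empty => simp
  | insert a s ha ih =>
    have hint := integrable_prod_comp_of_monotone (μ := μ) hX hf hf0 hfM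
    have hmono : Monotone fun v : ↥s → ℝ => ∏ i ∈ s.attach, f (v i) := fun v w hvw =>
      Finset.prod_le_prod (fun i _ => hf0 _) fun i _ => hf (hvw i)
    have hcov := hNA s {a} (fun i hi => hs i (Finset.mem_insert_of_mem hi))
      (by simpa using hs a (Finset.mem_insert_self a s)) (Finset.disjoint_singleton_right.2 ha)
      _ (fun v => f (v ⟨a, Finset.mem_singleton_self a⟩)) hmono (fun v w hvw => hf (hvw _))
    have hattach (ω : Ω) : ∏ i ∈ s.attach, f (X i ω) = ∏ i ∈ s, f (X i ω) :=
      Finset.prod_attach s fun i => f (X i ω)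
    simp only [hattach] at hcov
    calc ∫ ω, ∏ i ∈ insert a s, f (X i ω) ∂μ
        = ∫ ω, (∏ i ∈ s, f (X i ω)) * f (X a ω) ∂μ := by
          simp only [Finset.prod_insert ha, mul_comm]
      _ ≤ (∫ ω, ∏ i ∈ s, f (X i ω) ∂μ) * ∫ ω, f (X a ω) ∂μ := by
          refine hcov (hint s) (by simpa using hint {a}) ?_
          simpa [Finset.prod_insert ha, mul_comm] using hint (insert a s)
      _ ≤ (∏ i ∈ s, ∫ ω, f (X i ω) ∂μ) * ∫ ω, f (X a ω) ∂μ :=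
          mul_le_mul_of_nonneg_right (ih fun i hi => hs i (Finset.mem_insert_of_mem hi))
            (integral_nonneg fun ω => hf0 _)
      _ = ∏ i ∈ insert a s, ∫ ω, f (X i ω) ∂μ := by rw [Finset.prod_insert ha, mul_comm]

end

section

variable {Ω : Type*} [MeasurableSpace Ω] {μ : Measure Ω} [IsProbabilityMeasure μ] {p : ℝ}

lemma integrable_exp_mul_min {Y : Ω → ℝ} (hY : AEStronglyMeasurable Y μ) (t b : ℝ) (ht : 0 ≤ t) :
    Integrable (fun ω => exp (t * min (Y ω) b)) μ := by
  refine .of_bound (C := exp (t * b)) ?_ (ae_of_all _ fun ω => ?_)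
  · exact (continuous_exp.comp ((continuous_const.mul (continuous_id.min continuous_const))))
      |>.comp_aestronglyMeasurable hY
  · rw [Real.norm_of_nonneg (exp_pos _).le]
    gcongr
    exact min_le_right _ _

lemma integral_exp_mul_min_le {Y : Ω → ℝ} (hY : Integrable Y μ) (hY0 : ∫ ω, Y ω ∂μ ≤ 0)
    (hK : Integrable (fun ω => Y ω ^ 2 * exp (|Y ω| ^ p)) μ) {t b : ℝ} (hp0 : 0 ≤ p)
    (hp1 : p ≤ 1) (hb : 0 ≤ b) (ht : 0 ≤ t) (htb : t ≤ b ^ (p - 1)) :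
    ∫ ω, exp (t * min (Y ω) b) ∂μ ≤ 1 + t ^ 2 * ∫ ω, Y ω ^ 2 * exp (|Y ω| ^ p) ∂μ := by
  have hmin : Integrable (fun ω => min (Y ω) b) μ := hY.inf (integrable_const b)
  have hmin0 : ∫ ω, min (Y ω) b ∂μ ≤ 0 :=
    (integral_mono hmin hY fun ω => min_le_left _ _).trans hY0
  have hlin : Integrable (fun ω => 1 + t * min (Y ω) b) μ :=
    (integrable_const 1).add (hmin.const_mul t)
  calc ∫ ω, exp (t * min (Y ω) b) ∂μ
      ≤ ∫ ω, 1 + t * min (Y ω) b + t ^ 2 * (Y ω ^ 2 * exp (|Y ω| ^ p)) ∂μ :=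
        integral_mono (integrable_exp_mul_min hY.aestronglyMeasurable t b ht)
          (hlin.add (hK.const_mul _))
          fun ω => exp_mul_min_le hp0 hp1 hb ht htb
    _ = 1 + t * ∫ ω, min (Y ω) b ∂μ + t ^ 2 * ∫ ω, Y ω ^ 2 * exp (|Y ω| ^ p) ∂μ := by
        rw [integral_add hlin (hK.const_mul _),
          integral_add (integrable_const 1) (hmin.const_mul t), integral_const_mul,
          integral_const_mul]
        simp
    _ ≤ 1 + t ^ 2 * ∫ ω, Y ω ^ 2 * exp (|Y ω| ^ p) ∂μ := by
        nlinarith [mul_nonpos_of_nonneg_of_nonpos ht hmin0]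

lemma measureReal_lt_le_integral_sq_mul_exp_rpow {Y : Ω → ℝ}
    (hK : Integrable (fun ω => Y ω ^ 2 * exp (|Y ω| ^ p)) μ) {b : ℝ} (hb : 0 < b) (hp0 : 0 ≤ p) :
    μ.real {ω | b < Y ω} ≤ (∫ ω, Y ω ^ 2 * exp (|Y ω| ^ p) ∂μ) / (b ^ 2 * exp (b ^ p)) := by
  have hsub : {ω | b < Y ω} ⊆ {ω | b ^ 2 * exp (b ^ p) ≤ Y ω ^ 2 * exp (|Y ω| ^ p)} := by
    intro ω (hω : b < Y ω)
    have hbY : b ≤ |Y ω| := hω.le.trans (le_abs_self _)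
    show b ^ 2 * exp (b ^ p) ≤ Y ω ^ 2 * exp (|Y ω| ^ p)
    gcongr
  rw [le_div_iff₀ (by positivity), mul_comm]
  exact (mul_le_mul_of_nonneg_left (measureReal_mono hsub) (by positivity)).trans
    (mul_meas_ge_le_integral_of_nonneg (ae_of_all _ fun ω => by positivity) hK _)

end

lemma setOf_exists_le_pSum_subset {Ω : Type*} (X : ℕ → Ω → ℝ) (n : ℕ) (y b : ℝ) :
    {ω | ∃ k ∈ Icc 1 n, y ≤ pSum X k ω} ⊆
      (⋃ i ∈ Icc 1 n, {ω | b < X i ω}) ∪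
        ⋃ k ∈ Icc 1 n, {ω | y ≤ ∑ i ∈ Icc 1 k, min (X i ω) b} := by
  rintro ω ⟨k, hk, hyS⟩
  by_cases hbig : ∃ i ∈ Icc 1 n, b < X i ω
  · obtain ⟨i, hi, hbi⟩ := hbig
    exact Or.inl (Set.mem_biUnion hi hbi)
  · push Not at hbig
    refine Or.inr (Set.mem_biUnion hk ?_)
    have htrunc : ∑ i ∈ Icc 1 k, min (X i ω) b = pSum X k ω :=
      Finset.sum_congr rfl fun i hi =>
        min_eq_left (hbig i (Icc_subset_Icc_right (mem_Icc.1 hk).2 hi))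
    show y ≤ _
    rwa [htrunc]

section

variable {Ω : Type*} [MeasurableSpace Ω] {μ : Measure Ω} [IsProbabilityMeasure μ]
  {X : ℕ → Ω → ℝ} {p : ℝ}

lemma measureReal_le_sum_min_le (hNA : NegAssoc μ X) (hmeas : ∀ i, Measurable (X i))
    (hint : ∀ i, 1 ≤ i → Integrable (X i) μ) (hmean : ∀ i, 1 ≤ i → ∫ ω, X i ω ∂μ ≤ 0)
    (hintK : ∀ i, 1 ≤ i → Integrable (fun ω => X i ω ^ 2 * exp (|X i ω| ^ p)) μ)
    (hp0 : 0 ≤ p) (hp1 : p ≤ 1) {b t : ℝ} (hb : 0 ≤ b) (ht : 0 ≤ t) (htb : t ≤ b ^ (p - 1))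
    (s : Finset ℕ) (hs : ∀ i ∈ s, 1 ≤ i) (y : ℝ) :
    μ.real {ω | y ≤ ∑ i ∈ s, min (X i ω) b} ≤
      exp (t ^ 2 * ∑ i ∈ s, ∫ ω, X i ω ^ 2 * exp (|X i ω| ^ p) ∂μ - t * y) := by
  set f : ℝ → ℝ := fun x => exp (t * min x b)
  have hf : Monotone f := fun x x' hx => exp_le_exp.2 (by gcongr)
  have hf0 : 0 ≤ f := fun x => (exp_pos _).le
  have hfM : ∀ x, f x ≤ exp (t * b) := fun x => exp_le_exp.2 (by gcongr; exact min_le_right _ _)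
  have hprod (ω : Ω) : exp (t * ∑ i ∈ s, min (X i ω) b) = ∏ i ∈ s, f (X i ω) := by
    rw [Finset.mul_sum, exp_sum]
  have hmgf : mgf (fun ω => ∑ i ∈ s, min (X i ω) b) μ t ≤
      exp (t ^ 2 * ∑ i ∈ s, ∫ ω, X i ω ^ 2 * exp (|X i ω| ^ p) ∂μ) :=
    calc mgf (fun ω => ∑ i ∈ s, min (X i ω) b) μ t = ∫ ω, ∏ i ∈ s, f (X i ω) ∂μ := by
          simp only [mgf, hprod]
      _ ≤ ∏ i ∈ s, ∫ ω, f (X i ω) ∂μ := hNA.integral_prod_le_prod_integral hmeas hf hf0 hfM s hs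
      _ ≤ ∏ i ∈ s, exp (t ^ 2 * ∫ ω, X i ω ^ 2 * exp (|X i ω| ^ p) ∂μ) := by
          refine Finset.prod_le_prod (fun i _ => integral_nonneg fun ω => hf0 _) fun i hi => ?_
          refine (integral_exp_mul_min_le (hint i (hs i hi)) (hmean i (hs i hi))
            (hintK i (hs i hi)) hp0 hp1 hb ht htb).trans ?_
          linarith [add_one_le_exp (t ^ 2 * ∫ ω, X i ω ^ 2 * exp (|X i ω| ^ p) ∂μ)]
      _ = exp (t ^ 2 * ∑ i ∈ s, ∫ ω, X i ω ^ 2 * exp (|X i ω| ^ p) ∂μ) := by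
          rw [Finset.mul_sum, exp_sum]
  have hint_exp : Integrable (fun ω => exp (t * ∑ i ∈ s, min (X i ω) b)) μ := by
    simpa only [hprod] using integrable_prod_comp_of_monotone hmeas hf hf0 hfM s
  calc μ.real {ω | y ≤ ∑ i ∈ s, min (X i ω) b}
      ≤ exp (-t * y) * mgf (fun ω => ∑ i ∈ s, min (X i ω) b) μ t :=
        measure_ge_le_exp_mul_mgf y ht hint_exp
    _ ≤ exp (-t * y) * exp (t ^ 2 * ∑ i ∈ s, ∫ ω, X i ω ^ 2 * exp (|X i ω| ^ p) ∂μ) := by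
        gcongr
    _ = _ := by rw [← exp_add]; ring_nf

theorem measureReal_exists_le_pSum_le (hNA : NegAssoc μ X) (hmeas : ∀ i, Measurable (X i))
    (hint : ∀ i, 1 ≤ i → Integrable (X i) μ) (hmean : ∀ i, 1 ≤ i → ∫ ω, X i ω ∂μ ≤ 0)
    (hintK : ∀ i, 1 ≤ i → Integrable (fun ω => X i ω ^ 2 * exp (|X i ω| ^ p)) μ)
    (hp0 : 0 ≤ p) (hp1 : p ≤ 1) {b t : ℝ} (hb : 0 < b) (ht : 0 ≤ t) (htb : t ≤ b ^ (p - 1))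
    (n : ℕ) (y : ℝ) :
    μ.real {ω | ∃ k ∈ Icc 1 n, y ≤ pSum X k ω} ≤
      (∑ i ∈ Icc 1 n, ∫ ω, X i ω ^ 2 * exp (|X i ω| ^ p) ∂μ) / (b ^ 2 * exp (b ^ p)) +
        n * exp (t ^ 2 * ∑ i ∈ Icc 1 n, ∫ ω, X i ω ^ 2 * exp (|X i ω| ^ p) ∂μ - t * y) := by
  calc μ.real {ω | ∃ k ∈ Icc 1 n, y ≤ pSum X k ω}
      ≤ μ.real (⋃ i ∈ Icc 1 n, {ω | b < X i ω}) +
          μ.real (⋃ k ∈ Icc 1 n, {ω | y ≤ ∑ i ∈ Icc 1 k, min (X i ω) b}) :=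
        (measureReal_mono (setOf_exists_le_pSum_subset X n y b)).trans
          (measureReal_union_le _ _)
    _ ≤ ∑ i ∈ Icc 1 n, μ.real {ω | b < X i ω} +
          ∑ k ∈ Icc 1 n, μ.real {ω | y ≤ ∑ i ∈ Icc 1 k, min (X i ω) b} :=
        add_le_add (measureReal_biUnion_finset_le _ _) (measureReal_biUnion_finset_le _ _)
    _ ≤ ∑ i ∈ Icc 1 n, (∫ ω, X i ω ^ 2 * exp (|X i ω| ^ p) ∂μ) / (b ^ 2 * exp (b ^ p)) +
          ∑ k ∈ Icc 1 n,
            exp (t ^ 2 * ∑ i ∈ Icc 1 n, ∫ ω, X i ω ^ 2 * exp (|X i ω| ^ p) ∂μ - t * y) := by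
        gcongr with i hi k hk
        · exact measureReal_lt_le_integral_sq_mul_exp_rpow (hintK i (mem_Icc.1 hi).1) hb hp0
        · refine (measureReal_le_sum_min_le hNA hmeas hint hmean hintK hp0 hp1 hb.le ht htb _
            (fun i hi => (mem_Icc.1 hi).1) y).trans (exp_le_exp.2 ?_)
          gcongr
          exact (mem_Icc.1 hk).2
    _ = _ := by rw [← Finset.sum_div, Finset.sum_const, Nat.card_Icc, nsmul_eq_mul]; simp

end

-- The two halves `3/8` are what the Chernoff exponent `-b^p` can absorb while leaving `-b^p/4`.
lemma div_add_mul_exp_le_two_mul_exp {b p K n y : ℝ} (hb : 0 < b) (hn : 0 < n)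
    (hKb : K ≤ b ^ 2) (hlog : log n ≤ 3 / 8 * b ^ p) (hK : K ≤ 3 / 8 * b ^ (2 - p))
    (hby : b ≤ y) :
    K / (b ^ 2 * exp (b ^ p)) + n * exp ((b ^ (p - 1)) ^ 2 * K - b ^ (p - 1) * y) ≤
      2 * exp (-(b ^ p / 4)) := by
  have hbp : 0 < b ^ p := rpow_pos_of_pos hb p
  have hfirst : K / (b ^ 2 * exp (b ^ p)) ≤ exp (-(b ^ p / 4)) :=
    calc K / (b ^ 2 * exp (b ^ p)) ≤ b ^ 2 / (b ^ 2 * exp (b ^ p)) := by gcongr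
      _ = exp (-b ^ p) := by rw [exp_neg]; field_simp
      _ ≤ exp (-(b ^ p / 4)) := exp_le_exp.2 (by linarith)
  have hquad : (b ^ (p - 1)) ^ 2 * K ≤ 3 / 8 * b ^ p :=
    calc (b ^ (p - 1)) ^ 2 * K ≤ (b ^ (p - 1)) ^ 2 * (3 / 8 * b ^ (2 - p)) := by gcongr
      _ = 3 / 8 * b ^ p := by
        rw [← rpow_natCast, ← rpow_mul hb.le, mul_left_comm, ← rpow_add hb]
        norm_num; ring_nf
  have hlin : b ^ p ≤ b ^ (p - 1) * y :=
    calc b ^ p = b ^ (p - 1) * b := by rw [← rpow_add_one hb.ne', sub_add_cancel]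
      _ ≤ b ^ (p - 1) * y := by gcongr
  have hsecond : n * exp ((b ^ (p - 1)) ^ 2 * K - b ^ (p - 1) * y) ≤ exp (-(b ^ p / 4)) := by
    rw [← exp_log hn, ← exp_add]
    exact exp_le_exp.2 (by linarith)
  linarith

lemma eventually_mul_le_sq_and_log_le_rpow {p : ℝ} (hp0 : 0 < p) (hp1 : p < 1) {a : ℝ}
    (ha : 0 < a) (C : ℝ) :
    ∀ᶠ n : ℕ in atTop, C * n ≤ (a * n) ^ 2 ∧ log n ≤ 3 / 8 * (a * n) ^ p ∧
      C * n ≤ 3 / 8 * (a * n) ^ (2 - p) := by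
  suffices ∀ᶠ y : ℝ in atTop, C * y ≤ (a * y) ^ 2 ∧ log y ≤ 3 / 8 * (a * y) ^ p ∧
      C * y ≤ 3 / 8 * (a * y) ^ (2 - p) from tendsto_natCast_atTop_atTop.eventually this
  have hsq : ∀ᶠ y : ℝ in atTop, C ≤ a ^ 2 * y :=
    (tendsto_id.const_mul_atTop (by positivity)).eventually_ge_atTop C
  have hlog : ∀ᶠ y : ℝ in atTop, log y ≤ 3 / 8 * a ^ p * y ^ p := by
    filter_upwards [(isLittleO_log_rpow_atTop hp0).bound (by positivity : 0 < 3 / 8 * a ^ p),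
      eventually_ge_atTop 0] with y hy hy0
    simpa [Real.norm_eq_abs, abs_of_nonneg (rpow_nonneg hy0 p)] using (le_abs_self _).trans hy
  have hpow : ∀ᶠ y : ℝ in atTop, C ≤ 3 / 8 * a ^ (2 - p) * y ^ (1 - p) :=
    ((tendsto_rpow_atTop (by linarith)).const_mul_atTop (by positivity)).eventually_ge_atTop C
  filter_upwards [hsq, hlog, hpow, eventually_gt_atTop 0] with y hsq hlog hpow hy
  refine ⟨by nlinarith, ?_, ?_⟩
  · rwa [mul_rpow ha.le hy.le, ← mul_assoc]
  · have hy_pow : y ^ (2 - p) = y ^ (1 - p) * y := by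
      rw [← rpow_add_one hy.ne']; ring_nf
    rw [mul_rpow ha.le hy.le, hy_pow]
    nlinarith

theorem stmt12_general {Ω : Type*} [MeasurableSpace Ω] (μ : Measure Ω) [IsProbabilityMeasure μ]
    (X : ℕ → Ω → ℝ) (hmeas : ∀ i, Measurable (X i)) (hNA : NegAssoc μ X)
    (hint : ∀ i, 1 ≤ i → Integrable (X i) μ)
    (hmean : ∀ i, 1 ≤ i → ∫ ω, X i ω ∂μ = 0)
    (p : ℝ) (hp0 : 0 < p) (hp1 : p < 1)
    (hintK : ∀ i, 1 ≤ i → Integrable (fun ω => X i ω ^ 2 * Real.exp (|X i ω| ^ p)) μ)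
    (C : ℝ)
    (hK : ∀ n : ℕ, 1 ≤ n →
      1 ≤ (∑ i ∈ Finset.Icc 1 n, ∫ ω, X i ω ^ 2 * Real.exp (|X i ω| ^ p) ∂μ) ∧
      (∑ i ∈ Finset.Icc 1 n, ∫ ω, X i ω ^ 2 * Real.exp (|X i ω| ^ p) ∂μ) ≤ C * n)
    (α : ℝ) (hα0 : 0 < α) (hα1 : α < 1) :
    ∃ c : ℝ, 0 < c ∧ ∀ x : ℝ, 0 < x → ∃ N : ℕ, ∀ n : ℕ, N ≤ n →
      (μ {ω | ∃ k ∈ Finset.Icc 1 n, (n : ℝ) * x ≤ pSum X k ω}).toReal ≤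
        2 * (1 - α)⁻¹ * Real.exp (-(c * α ^ p * x ^ p * (n : ℝ) ^ p)) := by
  refine ⟨1 / 4, by norm_num, fun x hx => ?_⟩
  obtain ⟨N, hN⟩ := ((eventually_mul_le_sq_and_log_le_rpow hp0 hp1 (mul_pos hα0 hx) C).and
    (eventually_ge_atTop 1)).exists_forall_of_atTop
  refine ⟨N, fun n hn => ?_⟩
  obtain ⟨⟨hKb, hlog, hKpow⟩, hn1⟩ := hN n hn
  set b := α * x * n
  have hnpos : (0 : ℝ) < n := by exact_mod_cast hn1
  have hb : 0 < b := by positivity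
  have hby : b ≤ n * x := by nlinarith [mul_pos hx hnpos]
  have hbp : b ^ p = α ^ p * x ^ p * (n : ℝ) ^ p := by
    rw [mul_rpow (by positivity) hnpos.le, mul_rpow hα0.le hx.le]
  have hinv : 1 ≤ (1 - α)⁻¹ := (one_le_inv₀ (by linarith)).2 (by linarith)
  calc μ.real {ω | ∃ k ∈ Icc 1 n, (n : ℝ) * x ≤ pSum X k ω}
      ≤ (∑ i ∈ Icc 1 n, ∫ ω, X i ω ^ 2 * exp (|X i ω| ^ p) ∂μ) / (b ^ 2 * exp (b ^ p)) +
          n * exp ((b ^ (p - 1)) ^ 2 * ∑ i ∈ Icc 1 n, ∫ ω, X i ω ^ 2 * exp (|X i ω| ^ p) ∂μ -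
            b ^ (p - 1) * (n * x)) :=
        measureReal_exists_le_pSum_le hNA hmeas hint (fun i hi => (hmean i hi).le) hintK
          hp0.le hp1.le hb (rpow_nonneg hb.le _) le_rfl n _
    _ ≤ C * n / (b ^ 2 * exp (b ^ p)) +
          n * exp ((b ^ (p - 1)) ^ 2 * (C * n) - b ^ (p - 1) * (n * x)) := by
        gcongr <;> exact (hK n hn1).2
    _ ≤ 2 * exp (-(b ^ p / 4)) := div_add_mul_exp_le_two_mul_exp hb hnpos hKb hlog hKpow hby
    _ = 2 * exp (-(1 / 4 * α ^ p * x ^ p * (n : ℝ) ^ p)) := by rw [hbp]; ring_nf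
    _ ≤ 2 * (1 - α)⁻¹ * exp (-(1 / 4 * α ^ p * x ^ p * (n : ℝ) ^ p)) :=
        mul_le_mul_of_nonneg_right (le_mul_of_one_le_right zero_le_two hinv) (exp_pos _).le

/-- Remark (2.60): for `p ∈ (0,1)`, centered NA random variables with
`K_n := ∑_{i=1}^n E[X_i² exp{|X_i|^p}]` satisfying `1 ≤ K_n ≤ Cn`, for any `0 < α < 1` there
is `c > 0`, not depending on `n`, so that for any `x > 0` and all sufficiently large `n`,
`P(max_{1≤k≤n} S_k ≥ nx) ≤ 2(1−α)⁻¹ exp{−c α^p x^p n^p}`. -/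
theorem stmt12 {Ω : Type*} [MeasurableSpace Ω] (μ : Measure Ω) [IsProbabilityMeasure μ]
    (X : ℕ → Ω → ℝ) (hmeas : ∀ i, Measurable (X i)) (hNA : NegAssoc μ X)
    (hint : ∀ i, 1 ≤ i → Integrable (X i) μ)
    (hmean : ∀ i, 1 ≤ i → ∫ ω, X i ω ∂μ = 0)
    (p : ℝ) (hp0 : 0 < p) (hp1 : p < 1)
    (hintK : ∀ i, 1 ≤ i → Integrable (fun ω => X i ω ^ 2 * Real.exp (|X i ω| ^ p)) μ)
    (C : ℝ) (hC : 1 ≤ C)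
    (hK : ∀ n : ℕ, 1 ≤ n →
      1 ≤ (∑ i ∈ Finset.Icc 1 n, ∫ ω, X i ω ^ 2 * Real.exp (|X i ω| ^ p) ∂μ) ∧
      (∑ i ∈ Finset.Icc 1 n, ∫ ω, X i ω ^ 2 * Real.exp (|X i ω| ^ p) ∂μ) ≤ C * n)
    (α : ℝ) (hα0 : 0 < α) (hα1 : α < 1) :
    ∃ c : ℝ, 0 < c ∧ ∀ x : ℝ, 0 < x → ∃ N : ℕ, ∀ n : ℕ, N ≤ n →
      (μ {ω | ∃ k ∈ Finset.Icc 1 n, (n : ℝ) * x ≤ pSum X k ω}).toReal ≤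
        2 * (1 - α)⁻¹ * Real.exp (-(c * α ^ p * x ^ p * (n : ℝ) ^ p)) :=
  stmt12_general μ X hmeas hNA hint hmean p hp0 hp1 hintK C hK α hα0 hα1
end

section
/- Let p > 1 and let {X_i, i ≥ 1} be a sequence of non-degenerate NA random variables with E[X_i] = 0 for all i. Assume there is a constant a > 0 with K := Σ_{i=1}^n E[exp{a|X_i|^p}] < ∞. Let q = p/(p−1) and let τ > 0 satisfy (qτ)^{1/q}(pa)^{1/p} = 1. Then for any τ_1 > τ there exist positive numbers t_1 and A, depending only on a, K and p, such that E[e^{t S_n}] ≤ exp{n τ_1 t^q} for all t ≥ t_1, and E[e^{t S_n}] ≤ exp{n A t²} for all 0 ≤ t ≤ t_1. -/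
/-!
For `t ≥ 0`, negative association gives `E[e^{tS_n}] ≤ ∏ E[e^{tX_i}]`: the functions
`y ↦ e^{t ∑ y}` and `y ↦ e^{t y}` are nondecreasing, and truncating them at level `m` makes every
covariance exist. Each factor is then bounded in two ways. Young's inequality
`uv ≤ u^p/p + v^q/q` with `u = (pa)^{1/p}|x|` and `v = (qτ)^{1/q}t` (whose product is `t|x|`
by the choice of `τ`) gives `tx ≤ a|x|^p + τt^q`, hence
`E[e^{tX_i}] ≤ e^{τt^q} E[e^{a|X_i|^p}] ≤ e^{τt^q} K ≤ e^{τ₁t^q}` for large `t`.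
For bounded `t`, `e^y ≤ 1 + y + y²e^{|y|}`, `E[X_i] = 0` and `x²e^{t|x|} ≤ C e^{a|x|^p}` give
`E[e^{tX_i}] ≤ 1 + CKt² ≤ e^{CKt²}`.
-/

open MeasureTheory Finset Filter Topology

lemma Real.exp_le_one_add_add_sq_mul_exp_abs (y : ℝ) :
    Real.exp y ≤ 1 + y + y ^ 2 * Real.exp |y| := by
  have h1 : 1 ≤ Real.exp |y| := Real.one_le_exp (abs_nonneg y)
  rcases le_or_gt |y| 1 with hy | hy
  · have := (abs_le.1 (Real.abs_exp_sub_one_sub_id_le hy)).2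
    nlinarith [sq_nonneg y]
  rcases le_or_gt 0 y with hy0 | hy0
  · rw [abs_of_nonneg hy0] at hy ⊢
    have : Real.exp y ≤ y ^ 2 * Real.exp y :=
      le_mul_of_one_le_left (Real.exp_pos y).le (by nlinarith)
    linarith
  · rw [abs_of_neg hy0] at hy
    nlinarith [Real.exp_le_one_iff.2 hy0.le]

lemma Real.mul_le_mul_rpow_add_rpow_div {p q a s t : ℝ} (hpq : p.HolderConjugate q)
    (ha : 0 < a) (hs : 0 ≤ s) (ht : 0 ≤ t) :
    t * s ≤ a * s ^ p + (t / (p * a) ^ (1 / p)) ^ q / q := by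
  have hpa : 0 < p * a := mul_pos hpq.pos ha
  have hcp : ((p * a) ^ (1 / p)) ^ p = p * a := by
    rw [one_div, Real.rpow_inv_rpow hpa.le hpq.ne_zero]
  set c := (p * a) ^ (1 / p)
  have hc : 0 < c := Real.rpow_pos_of_pos hpa _
  have h := Real.young_inequality_of_nonneg (mul_nonneg hc.le hs) (div_nonneg ht hc.le) hpq
  rw [Real.mul_rpow hc.le hs, hcp] at h
  calc t * s = c * s * (t / c) := by field_simp
    _ ≤ _ := h.trans_eq (by field_simp [hpq.ne_zero])

lemma Real.mul_le_mul_abs_rpow_add_mul_rpow {p q a τ : ℝ} (hpq : p.HolderConjugate q)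
    (ha : 0 < a) (hτ : 0 < τ) (hτeq : (q * τ) ^ (1 / q) * (p * a) ^ (1 / p) = 1)
    {t : ℝ} (ht : 0 ≤ t) (x : ℝ) : t * x ≤ a * |x| ^ p + τ * t ^ q := by
  have hqτ : 0 < q * τ := mul_pos hpq.symm.pos hτ
  have hc : 0 < (p * a) ^ (1 / p) := Real.rpow_pos_of_pos (mul_pos hpq.pos ha) _
  have htc : (t / (p * a) ^ (1 / p)) ^ q / q = τ * t ^ q := by
    rw [show t / (p * a) ^ (1 / p) = (q * τ) ^ (1 / q) * t by
        field_simp; linear_combination (-t) * hτeq,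
      Real.mul_rpow (Real.rpow_nonneg hqτ.le _) ht, one_div,
      Real.rpow_inv_rpow hqτ.le hpq.symm.ne_zero]
    field_simp [hpq.symm.ne_zero]
  calc t * x ≤ t * |x| := mul_le_mul_of_nonneg_left (le_abs_self x) ht
    _ ≤ _ := Real.mul_le_mul_rpow_add_rpow_div hpq ha (abs_nonneg x) ht
    _ = a * |x| ^ p + τ * t ^ q := by rw [htc]

lemma exists_sq_mul_exp_le_mul_exp_rpow {p a t₁ : ℝ} (hp : 1 < p) (ha : 0 < a) (ht₁ : 0 ≤ t₁) :
    ∃ C > 0, ∀ t x : ℝ, t ≤ t₁ →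
      x ^ 2 * Real.exp (t * |x|) ≤ C * Real.exp (a * |x| ^ p) := by
  set D := ((1 + t₁) / (p * a) ^ (1 / p)) ^ p.conjExponent / p.conjExponent
  refine ⟨2 * Real.exp D, by positivity, fun t x htt => ?_⟩
  have hs := abs_nonneg x
  have hsq : x ^ 2 ≤ 2 * Real.exp |x| := by
    rw [← sq_abs]; nlinarith [Real.quadratic_le_exp_of_nonneg hs]
  have hlin : (1 + t₁) * |x| ≤ a * |x| ^ p + D :=
    Real.mul_le_mul_rpow_add_rpow_div (.conjExponent hp) ha hs (by linarith)
  calc x ^ 2 * Real.exp (t * |x|) ≤ 2 * Real.exp |x| * Real.exp (t₁ * |x|) :=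
        mul_le_mul hsq (Real.exp_le_exp.2 (by nlinarith)) (Real.exp_pos _).le (by positivity)
    _ = 2 * Real.exp ((1 + t₁) * |x|) := by rw [mul_assoc, ← Real.exp_add]; ring_nf
    _ ≤ 2 * Real.exp (a * |x| ^ p + D) := by gcongr
    _ = 2 * Real.exp D * Real.exp (a * |x| ^ p) := by rw [Real.exp_add]; ring

lemma exists_pos_forall_le_exp_mul_rpow {c q : ℝ} (hc : 0 < c) (hq : 0 < q) (K : ℝ) :
    ∃ t₁ > 0, ∀ t ≥ t₁, K ≤ Real.exp (c * t ^ q) := by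
  have h : Tendsto (fun t : ℝ => Real.exp (c * t ^ q)) atTop atTop :=
    Real.tendsto_exp_atTop.comp ((tendsto_rpow_atTop hq).const_mul_atTop hc)
  obtain ⟨t₀, ht₀⟩ := eventually_atTop.1 (h.eventually_ge_atTop K)
  exact ⟨max t₀ 1, by positivity, fun t ht => ht₀ t (le_of_max_le_left ht)⟩

lemma tendsto_min_natCast_mul_min_natCast (u v : ℝ) :
    Tendsto (fun m : ℕ => min u m * min v m) atTop (𝓝 (u * v)) := by
  refine tendsto_const_nhds.congr' ?_
  obtain ⟨N, hN⟩ := exists_nat_ge (max u v)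
  filter_upwards [eventually_ge_atTop N] with m hm
  have hm' : max u v ≤ m := hN.trans (Nat.cast_le.2 hm)
  rw [min_eq_left ((le_max_left u v).trans hm'), min_eq_left ((le_max_right u v).trans hm')]

lemma integrable_and_integral_le_of_monotone_tendsto {α : Type*} [MeasurableSpace α]
    {μ : Measure α} {f : ℕ → α → ℝ} {F : α → ℝ} {c : ℝ} (hf : ∀ n, Integrable (f n) μ) (hf₀ : ∀ n x, 0 ≤ f n x)
    (hmono : ∀ x, Monotone fun n => f n x)
    (hlim : ∀ x, Tendsto (fun n => f n x) atTop (𝓝 (F x)))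
    (hc : ∀ n, ∫ x, f n x ∂μ ≤ c) :
    Integrable F μ ∧ ∫ x, F x ∂μ ≤ c := by
  have hF₀ : 0 ≤ᵐ[μ] F := ae_of_all _ fun x => ge_of_tendsto' (hlim x) (hf₀ · x)
  have hlintegral : ∫⁻ x, ENNReal.ofReal (F x) ∂μ ≤ ENNReal.ofReal c := by
    refine le_of_tendsto' (lintegral_tendsto_of_tendsto_of_monotone
      (fun n => (hf n).aemeasurable.ennreal_ofReal)
      (ae_of_all _ fun x _ _ h => ENNReal.ofReal_le_ofReal (hmono x h))
      (ae_of_all _ fun x => (ENNReal.continuous_ofReal.tendsto _).comp (hlim x))) fun n => ?_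
    rw [← ofReal_integral_eq_lintegral_ofReal (hf n) (ae_of_all _ (hf₀ n))]
    exact ENNReal.ofReal_le_ofReal (hc n)
  have hF : Integrable F μ :=
    ⟨aestronglyMeasurable_of_tendsto_ae atTop (fun n => (hf n).1) (ae_of_all _ hlim),
      (hasFiniteIntegral_iff_ofReal hF₀).2 (hlintegral.trans_lt ENNReal.ofReal_lt_top)⟩
  exact ⟨hF, le_of_tendsto' (integral_tendsto_of_tendsto_of_monotone hf hF
    (ae_of_all _ hmono) (ae_of_all _ hlim)) hc⟩

lemma pSum_succ {Ω : Type*} (X : ℕ → Ω → ℝ) (k : ℕ) (ω : Ω) :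
    pSum X (k + 1) ω = pSum X k ω + X (k + 1) ω :=
  sum_Icc_succ_top (Nat.le_add_left 1 k) _

section

variable {Ω : Type*} [MeasurableSpace Ω] {μ : Measure Ω} {X : ℕ → Ω → ℝ}

lemma integrable_and_integral_exp_mul_le {Y : Ω → ℝ} {a p t c : ℝ} (hY : AEMeasurable Y μ)
    (hexp : Integrable (fun ω => Real.exp (a * |Y ω| ^ p)) μ)
    (hc : ∀ x, t * x ≤ a * |x| ^ p + c) :
    Integrable (fun ω => Real.exp (t * Y ω)) μ ∧
      ∫ ω, Real.exp (t * Y ω) ∂μ ≤ Real.exp c * ∫ ω, Real.exp (a * |Y ω| ^ p) ∂μ := by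
  have hle (ω : Ω) : Real.exp (t * Y ω) ≤ Real.exp c * Real.exp (a * |Y ω| ^ p) := by
    rw [← Real.exp_add]; exact Real.exp_le_exp.2 ((hc _).trans_eq (add_comm _ _))
  have hint : Integrable (fun ω => Real.exp (t * Y ω)) μ :=
    (hexp.const_mul _).mono' (hY.const_mul t).exp.aestronglyMeasurable
      (ae_of_all _ fun ω => by rw [Real.norm_of_nonneg (Real.exp_pos _).le]; exact hle ω)
  refine ⟨hint, ?_⟩
  rw [← integral_const_mul]
  exact integral_mono hint (hexp.const_mul _) hle

-- Negative association only bounds covariances that exist; truncating at level `m` and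
-- letting `m → ∞` removes that proviso for nonnegative functions.
lemma NegAssoc.integrable_mul_and_integral_mul_le (hNA : NegAssoc μ X) {A₁ A₂ : Finset ℕ}
    (hA₁ : ∀ i ∈ A₁, 1 ≤ i) (hA₂ : ∀ j ∈ A₂, 1 ≤ j) (hd : Disjoint A₁ A₂)
    {f₁ : (↥A₁ → ℝ) → ℝ} {f₂ : (↥A₂ → ℝ) → ℝ} (hf₁ : Monotone f₁) (hf₂ : Monotone f₂)
    (hf₁₀ : ∀ y, 0 ≤ f₁ y) (hf₂₀ : ∀ y, 0 ≤ f₂ y)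
    (hi₁ : Integrable (fun ω => f₁ fun i => X i.1 ω) μ)
    (hi₂ : Integrable (fun ω => f₂ fun j => X j.1 ω) μ) :
    Integrable (fun ω => (f₁ fun i => X i.1 ω) * (f₂ fun j => X j.1 ω)) μ ∧
      ∫ ω, (f₁ fun i => X i.1 ω) * (f₂ fun j => X j.1 ω) ∂μ ≤
        (∫ ω, (f₁ fun i => X i.1 ω) ∂μ) * ∫ ω, (f₂ fun j => X j.1 ω) ∂μ := by
  set g₁ := fun ω => f₁ fun i => X i.1 ω
  set g₂ := fun ω => f₂ fun j => X j.1 ω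
  have hg₁₀ : ∀ ω, 0 ≤ g₁ ω := fun ω => hf₁₀ _
  have hg₂₀ : ∀ ω, 0 ≤ g₂ ω := fun ω => hf₂₀ _
  have hmin₀ {g : Ω → ℝ} (hg₀ : ∀ ω, 0 ≤ g ω) (m : ℕ) (ω : Ω) : 0 ≤ min (g ω) m :=
    le_min (hg₀ ω) m.cast_nonneg
  have hmin {g : Ω → ℝ} (hg : Integrable g μ) (hg₀ : ∀ ω, 0 ≤ g ω) (m : ℕ) :
      Integrable (fun ω => min (g ω) m) μ :=
    hg.mono (hg.1.inf aestronglyMeasurable_const) (ae_of_all _ fun ω => by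
      rw [Real.norm_of_nonneg (hg₀ ω), Real.norm_of_nonneg (hmin₀ hg₀ m ω)]
      exact min_le_left _ _)
  have hmin₁ := hmin hi₁ hg₁₀
  have hmin₂ := hmin hi₂ hg₂₀
  have hprod (m : ℕ) : Integrable (fun ω => min (g₁ ω) m * min (g₂ ω) m) μ :=
    (hi₁.mul_const m).mono ((hmin₁ m).1.mul (hmin₂ m).1) (ae_of_all _ fun ω => by
      rw [Real.norm_of_nonneg (mul_nonneg (hmin₀ hg₁₀ m ω) (hmin₀ hg₂₀ m ω)),
        Real.norm_of_nonneg (mul_nonneg (hg₁₀ ω) m.cast_nonneg)]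
      exact mul_le_mul (min_le_left _ _) (min_le_right _ _) (hmin₀ hg₂₀ m ω) (hg₁₀ ω))
  refine integrable_and_integral_le_of_monotone_tendsto hprod
    (fun m ω => mul_nonneg (hmin₀ hg₁₀ m ω) (hmin₀ hg₂₀ m ω))
    (fun ω m m' h => mul_le_mul (min_le_min_left _ (Nat.cast_le.2 h))
      (min_le_min_left _ (Nat.cast_le.2 h)) (hmin₀ hg₂₀ m ω) (hmin₀ hg₁₀ m' ω))
    (fun ω => tendsto_min_natCast_mul_min_natCast (g₁ ω) (g₂ ω)) fun m => ?_
  calc ∫ ω, min (g₁ ω) m * min (g₂ ω) m ∂μ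
      ≤ (∫ ω, min (g₁ ω) m ∂μ) * ∫ ω, min (g₂ ω) m ∂μ :=
        hNA A₁ A₂ hA₁ hA₂ hd (fun y => min (f₁ y) m) (fun y => min (f₂ y) m)
          (fun _ _ h => min_le_min_right _ (hf₁ h)) (fun _ _ h => min_le_min_right _ (hf₂ h))
          (hmin₁ m) (hmin₂ m) (hprod m)
    _ ≤ (∫ ω, g₁ ω ∂μ) * ∫ ω, g₂ ω ∂μ :=
        mul_le_mul (integral_mono (hmin₁ m) hi₁ fun ω => min_le_left _ _)
          (integral_mono (hmin₂ m) hi₂ fun ω => min_le_left _ _)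
          (integral_nonneg (hmin₀ hg₂₀ m)) (integral_nonneg hg₁₀)

lemma NegAssoc.integrable_and_integral_exp_mul_pSum_succ_le (hNA : NegAssoc μ X) {t : ℝ}
    (ht : 0 ≤ t) {k : ℕ} (hS : Integrable (fun ω => Real.exp (t * pSum X k ω)) μ)
    (hX : Integrable (fun ω => Real.exp (t * X (k + 1) ω)) μ) :
    Integrable (fun ω => Real.exp (t * pSum X (k + 1) ω)) μ ∧
      ∫ ω, Real.exp (t * pSum X (k + 1) ω) ∂μ ≤
        (∫ ω, Real.exp (t * pSum X k ω) ∂μ) * ∫ ω, Real.exp (t * X (k + 1) ω) ∂μ := by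
  have hmem : k + 1 ∈ ({k + 1} : Finset ℕ) := mem_singleton_self _
  have hsum (ω : Ω) : ∑ i : ↥(Icc 1 k), X i ω = pSum X k ω := sum_coe_sort (Icc 1 k) (X · ω)
  have hexp (ω : Ω) : Real.exp (t * pSum X (k + 1) ω) =
      Real.exp (t * pSum X k ω) * Real.exp (t * X (k + 1) ω) := by
    rw [pSum_succ, ← Real.exp_add, mul_add]
  simp only [hexp]
  have := hNA.integrable_mul_and_integral_mul_le (A₁ := Icc 1 k) (A₂ := {k + 1})
    (fun i hi => (mem_Icc.1 hi).1) (fun j hj => by simp [mem_singleton.1 hj])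
    (disjoint_singleton_right.2 (by simp))
    (f₁ := fun y => Real.exp (t * ∑ i, y i)) (f₂ := fun y => Real.exp (t * y ⟨k + 1, hmem⟩))
    (fun y y' h => Real.exp_le_exp.2 (mul_le_mul_of_nonneg_left (sum_le_sum fun i _ => h i) ht))
    (fun y y' h => Real.exp_le_exp.2 (mul_le_mul_of_nonneg_left (h _) ht))
    (fun _ => (Real.exp_pos _).le) (fun _ => (Real.exp_pos _).le)
    (by simpa only [hsum] using hS) hX
  simpa only [hsum] using this

variable [IsProbabilityMeasure μ]

lemma integral_exp_mul_le_exp_sq_mul {Y : Ω → ℝ} {a p t C : ℝ}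
    (hY : Integrable Y μ) (hmean : ∫ ω, Y ω ∂μ = 0)
    (hexpt : Integrable (fun ω => Real.exp (t * Y ω)) μ)
    (hexp : Integrable (fun ω => Real.exp (a * |Y ω| ^ p)) μ) (ht : 0 ≤ t)
    (hC : ∀ x, x ^ 2 * Real.exp (t * |x|) ≤ C * Real.exp (a * |x| ^ p)) :
    ∫ ω, Real.exp (t * Y ω) ∂μ ≤ Real.exp (C * t ^ 2 * ∫ ω, Real.exp (a * |Y ω| ^ p) ∂μ) := by
  have hle (ω : Ω) :
      Real.exp (t * Y ω) ≤ 1 + t * Y ω + C * t ^ 2 * Real.exp (a * |Y ω| ^ p) := by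
    calc Real.exp (t * Y ω) ≤ 1 + t * Y ω + (t * Y ω) ^ 2 * Real.exp |t * Y ω| :=
          Real.exp_le_one_add_add_sq_mul_exp_abs _
      _ = 1 + t * Y ω + t ^ 2 * (Y ω ^ 2 * Real.exp (t * |Y ω|)) := by
          rw [abs_mul, abs_of_nonneg ht]; ring
      _ ≤ 1 + t * Y ω + t ^ 2 * (C * Real.exp (a * |Y ω| ^ p)) := by
          gcongr 1 + t * Y ω + t ^ 2 * ?_; exact hC _
      _ = 1 + t * Y ω + C * t ^ 2 * Real.exp (a * |Y ω| ^ p) := by ring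
  have hlin : Integrable (fun ω => 1 + t * Y ω) μ := (integrable_const 1).add (hY.const_mul t)
  calc ∫ ω, Real.exp (t * Y ω) ∂μ
      ≤ ∫ ω, (1 + t * Y ω + C * t ^ 2 * Real.exp (a * |Y ω| ^ p)) ∂μ :=
        integral_mono hexpt (hlin.add (hexp.const_mul _)) hle
    _ = 1 + C * t ^ 2 * ∫ ω, Real.exp (a * |Y ω| ^ p) ∂μ := by
        rw [integral_add hlin (hexp.const_mul _), integral_add (integrable_const 1)
          (hY.const_mul t), integral_const_mul, integral_const_mul, hmean]
        simp
    _ ≤ _ := by linarith [Real.add_one_le_exp (C * t ^ 2 * ∫ ω, Real.exp (a * |Y ω| ^ p) ∂μ)]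

lemma NegAssoc.integrable_and_integral_exp_mul_pSum_le_prod (hNA : NegAssoc μ X) {t : ℝ}
    (ht : 0 ≤ t) {n : ℕ}
    (hX : ∀ i ∈ Icc 1 n, Integrable (fun ω => Real.exp (t * X i ω)) μ) :
    Integrable (fun ω => Real.exp (t * pSum X n ω)) μ ∧
      ∫ ω, Real.exp (t * pSum X n ω) ∂μ ≤ ∏ i ∈ Icc 1 n, ∫ ω, Real.exp (t * X i ω) ∂μ := by
  induction n with
  | zero => simp [pSum]
  | succ k ih =>
    obtain ⟨hSk, hle⟩ := ih fun i hi => hX i (Icc_subset_Icc_right k.le_succ hi)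
    obtain ⟨hSk1, hle1⟩ := hNA.integrable_and_integral_exp_mul_pSum_succ_le ht hSk
      (hX (k + 1) (by simp))
    refine ⟨hSk1, hle1.trans ?_⟩
    rw [prod_Icc_succ_top (Nat.le_add_left 1 k)]
    exact mul_le_mul_of_nonneg_right hle (integral_nonneg fun _ => (Real.exp_pos _).le)

lemma NegAssoc.integral_exp_mul_pSum_le_exp_mul (hNA : NegAssoc μ X) {t b : ℝ} (ht : 0 ≤ t)
    {n : ℕ} (hX : ∀ i ∈ Icc 1 n, Integrable (fun ω => Real.exp (t * X i ω)) μ ∧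
      ∫ ω, Real.exp (t * X i ω) ∂μ ≤ Real.exp b) :
    ∫ ω, Real.exp (t * pSum X n ω) ∂μ ≤ Real.exp (n * b) := by
  calc ∫ ω, Real.exp (t * pSum X n ω) ∂μ ≤ ∏ i ∈ Icc 1 n, ∫ ω, Real.exp (t * X i ω) ∂μ :=
        (hNA.integrable_and_integral_exp_mul_pSum_le_prod ht fun i hi => (hX i hi).1).2
    _ ≤ ∏ _i ∈ Icc 1 n, Real.exp b :=
        prod_le_prod (fun _ _ => integral_nonneg fun _ => (Real.exp_pos _).le)
          fun i hi => (hX i hi).2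
    _ = Real.exp (n * b) := by rw [prod_const, Nat.card_Icc, Real.exp_nat_mul]; simp

end

theorem stmt13_general {Ω : Type*} [MeasurableSpace Ω] (μ : Measure Ω) [IsProbabilityMeasure μ]
    (X : ℕ → Ω → ℝ) (hmeas : ∀ i, Measurable (X i)) (hNA : NegAssoc μ X)
    (hint : ∀ i, 1 ≤ i → Integrable (X i) μ)
    (hmean : ∀ i, 1 ≤ i → ∫ ω, X i ω ∂μ = 0)
    (p : ℝ) (hp : 1 < p) (n : ℕ) (hn : 1 ≤ n) (a : ℝ) (ha : 0 < a)
    (hK : ∀ i ∈ Finset.Icc 1 n, Integrable (fun ω => Real.exp (a * |X i ω| ^ p)) μ)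
    (q τ : ℝ) (hq : q = p / (p - 1)) (hτ : 0 < τ)
    (hτeq : (q * τ) ^ (1 / q) * (p * a) ^ (1 / p) = 1)
    (τ₁ : ℝ) (hτ₁ : τ < τ₁) :
    ∃ t₁ : ℝ, 0 < t₁ ∧ ∃ A : ℝ, 0 < A ∧
      (∀ t : ℝ, t₁ ≤ t →
        ∫ ω, Real.exp (t * pSum X n ω) ∂μ ≤ Real.exp ((n : ℝ) * τ₁ * t ^ q)) ∧
      (∀ t : ℝ, 0 ≤ t → t ≤ t₁ →
        ∫ ω, Real.exp (t * pSum X n ω) ∂μ ≤ Real.exp ((n : ℝ) * A * t ^ 2)) := by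
  have hpq : p.HolderConjugate q := (Real.holderConjugate_iff_eq_conjExponent hp).2 hq
  set K := ∑ i ∈ Icc 1 n, ∫ ω, Real.exp (a * |X i ω| ^ p) ∂μ
  have hle_K (i : ℕ) (hi : i ∈ Icc 1 n) : ∫ ω, Real.exp (a * |X i ω| ^ p) ∂μ ≤ K :=
    single_le_sum (f := fun j => ∫ ω, Real.exp (a * |X j ω| ^ p) ∂μ)
      (fun j _ => integral_nonneg fun _ => (Real.exp_pos _).le) hi
  have hK_pos : 0 < K := sum_pos (fun i hi => integral_exp_pos (hK i hi)) ⟨1, by simp [hn]⟩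
  obtain ⟨t₁, ht₁, hK_le⟩ := exists_pos_forall_le_exp_mul_rpow (sub_pos.2 hτ₁) hpq.symm.pos K
  obtain ⟨C, hC, hCx⟩ := exists_sq_mul_exp_le_mul_exp_rpow hp ha ht₁.le
  have hyoung {t : ℝ} (ht : 0 ≤ t) (i : ℕ) (hi : i ∈ Icc 1 n) :=
    integrable_and_integral_exp_mul_le (hmeas i).aemeasurable (hK i hi)
      (Real.mul_le_mul_abs_rpow_add_mul_rpow hpq ha hτ hτeq ht)
  refine ⟨t₁, ht₁, C * K, mul_pos hC hK_pos, fun t ht => ?_, fun t ht htt => ?_⟩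
  · have ht₀ : 0 ≤ t := ht₁.le.trans ht
    refine (hNA.integral_exp_mul_pSum_le_exp_mul (b := τ₁ * t ^ q) ht₀ fun i hi =>
      ⟨(hyoung ht₀ i hi).1, (hyoung ht₀ i hi).2.trans ?_⟩).trans_eq (by ring_nf)
    calc Real.exp (τ * t ^ q) * ∫ ω, Real.exp (a * |X i ω| ^ p) ∂μ
        ≤ Real.exp (τ * t ^ q) * Real.exp ((τ₁ - τ) * t ^ q) := by
          gcongr; exact (hle_K i hi).trans (hK_le t ht)
      _ = Real.exp (τ₁ * t ^ q) := by rw [← Real.exp_add]; ring_nf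
  · refine (hNA.integral_exp_mul_pSum_le_exp_mul (b := C * K * t ^ 2) ht fun i hi =>
      ⟨(hyoung ht i hi).1, ?_⟩).trans_eq (by ring_nf)
    have hi₁ : 1 ≤ i := (mem_Icc.1 hi).1
    refine (integral_exp_mul_le_exp_sq_mul (hint i hi₁) (hmean i hi₁) (hyoung ht i hi).1
      (hK i hi) ht (hCx t · htt)).trans (Real.exp_le_exp.2 ?_)
    nlinarith [hle_K i hi, mul_nonneg hC.le (sq_nonneg t)]

/-- Proposition 2.5, inequality (2.15): for `p > 1`, non-degenerate centered NA random
variables with `K = ∑_{i=1}^n E[exp{a|X_i|^p}] < ∞`, `q` the conjugate exponent of `p` and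
`τ > 0` with `(qτ)^{1/q}(pa)^{1/p} = 1`: for any `τ₁ > τ` there are `t₁, A > 0` with
`E[e^{tS_n}] ≤ exp{nτ₁t^q}` for `t ≥ t₁` and `E[e^{tS_n}] ≤ exp{nAt²}` for `0 ≤ t ≤ t₁`. -/
theorem stmt13 {Ω : Type*} [MeasurableSpace Ω] (μ : Measure Ω) [IsProbabilityMeasure μ]
    (X : ℕ → Ω → ℝ) (hmeas : ∀ i, Measurable (X i)) (hNA : NegAssoc μ X)
    (hint : ∀ i, 1 ≤ i → Integrable (X i) μ)
    (hmean : ∀ i, 1 ≤ i → ∫ ω, X i ω ∂μ = 0)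
    (hnondeg : ∀ i, 1 ≤ i → ¬ ∃ c : ℝ, X i =ᵐ[μ] fun _ => c)
    (p : ℝ) (hp : 1 < p) (n : ℕ) (hn : 1 ≤ n) (a : ℝ) (ha : 0 < a)
    (hK : ∀ i ∈ Finset.Icc 1 n, Integrable (fun ω => Real.exp (a * |X i ω| ^ p)) μ)
    (q τ : ℝ) (hq : q = p / (p - 1)) (hτ : 0 < τ)
    (hτeq : (q * τ) ^ (1 / q) * (p * a) ^ (1 / p) = 1)
    (τ₁ : ℝ) (hτ₁ : τ < τ₁) :
    ∃ t₁ : ℝ, 0 < t₁ ∧ ∃ A : ℝ, 0 < A ∧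
      (∀ t : ℝ, t₁ ≤ t →
        ∫ ω, Real.exp (t * pSum X n ω) ∂μ ≤ Real.exp ((n : ℝ) * τ₁ * t ^ q)) ∧
      (∀ t : ℝ, 0 ≤ t → t ≤ t₁ →
        ∫ ω, Real.exp (t * pSum X n ω) ∂μ ≤ Real.exp ((n : ℝ) * A * t ^ 2)) :=
  stmt13_general μ X hmeas hNA hint hmean p hp n hn a ha hK q τ hq hτ hτeq τ₁ hτ₁
end

section
/- Let {X_i, i ≥ 1} be a sequence of NA random variables with E[X_i] = 0 for all i, and assume there exist constants m_i and M_i with m_i ≤ X_i ≤ M_i almost surely for 1 ≤ i ≤ n. Set M²(n) = Σ_{i=1}^n (M_i − m_i)² and D(n) = Σ_{i=1}^n (M_i − m_i). Then for any t ≥ 0, E[e^{t S_n}] ≤ exp{ (D²(n)/M²(n)) ℓ(M²(n) t / D(n)) }. -/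
/-!
`u ↦ ℓ(u)/u` is concave on `(0, ∞)`: `u³` times its second derivative tends to `0` at `0⁺` and
is decreasing there, its derivative being minus a sum of squares over a positive denominator.

For a centred variable with values in `[a, b]`, convexity of `exp` bounds `E e^{tY}` by the chord
value `(b e^{ta} - a e^{tb}) / (b - a)`, and since `ℓ(u) = max_p (log (1 + p (eᵘ - 1)) - p u)`
this is at most `exp ℓ(t (b - a))`. Negative association makes `E e^{t S}` submultiplicative over
disjoint blocks of indices, so `E e^{t Sₙ} ≤ exp (∑ ℓ(t dᵢ))` with `dᵢ = Mᵢ - mᵢ`. Finally, Jensen's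
inequality for `ℓ(u)/u` at the points `t dᵢ` with weights `dᵢ / D(n)` gives
`∑ ℓ(t dᵢ) ≤ (D²(n)/M²(n)) ℓ(M²(n) t / D(n))`.
-/

open MeasureTheory Finset

/-- Rio's function `ℓ(t) = (t − ln t − 1) + t(e^t − 1)⁻¹ + ln(1 − e^{−t})` for `t > 0`,
extended by continuity by `ℓ(0) = 0`. -/
noncomputable def rioL (t : ℝ) : ℝ :=
  if t = 0 then 0
  else (t - Real.log t - 1) + t * (Real.exp t - 1)⁻¹ + Real.log (1 - Real.exp (-t))

/-- The Young transform `ℓ*(x) = sup_{t>0}(xt − ℓ(t))` of Rio's function. -/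
noncomputable def rioLStar (x : ℝ) : ℝ :=
  sSup {r : ℝ | ∃ t : ℝ, 0 < t ∧ r = x * t - rioL t}

open Real Set Filter Topology

lemma exp_sub_one_pos {u : ℝ} (hu : 0 < u) : 0 < exp u - 1 :=
  sub_pos.2 (one_lt_exp_iff.2 hu)

noncomputable def rioFormula (u : ℝ) : ℝ :=
  u * (exp u - 1)⁻¹ - 1 + log (exp u - 1) - log u

lemma rioL_zero : rioL 0 = 0 := if_pos rfl

lemma rioL_eq_rioFormula {u : ℝ} (hu : 0 < u) : rioL u = rioFormula u := by
  have hE := exp_sub_one_pos hu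
  have h : 1 - exp (-u) = (exp u - 1) / exp u := by
    rw [exp_neg]
    field_simp
  rw [rioL, if_neg hu.ne', rioFormula, h, log_div hE.ne' (exp_pos u).ne', log_exp]
  ring

noncomputable def rioSlope (u : ℝ) : ℝ := rioFormula u / u

noncomputable def rioSlopeDeriv (u : ℝ) : ℝ :=
  -(exp u / (exp u - 1) ^ 2) + exp u / (u * (exp u - 1))
    - (log (exp u - 1) - log u) / u ^ 2

noncomputable def rioSlopeDeriv2 (u : ℝ) : ℝ :=
  exp u * (exp u + 1) / (exp u - 1) ^ 3
    - exp u * ((exp u - 1) + u) / (u ^ 2 * (exp u - 1) ^ 2)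
    - exp u / (u ^ 2 * (exp u - 1))
    + 1 / u ^ 3 + 2 * (log (exp u - 1) - log u) / u ^ 3

lemma hasDerivAt_exp_sub_one (u : ℝ) : HasDerivAt (fun x => exp x - 1) (exp u) u :=
  (hasDerivAt_exp u).sub_const 1

lemma hasDerivAt_log_exp_sub_one {u : ℝ} (hu : 0 < u) :
    HasDerivAt (fun x => log (exp x - 1) - log x) (exp u / (exp u - 1) - u⁻¹) u :=
  ((hasDerivAt_exp_sub_one u).log (exp_sub_one_pos hu).ne').sub (hasDerivAt_log hu.ne')

lemma hasDerivAt_rioSlope {u : ℝ} (hu : 0 < u) : HasDerivAt rioSlope (rioSlopeDeriv u) u := by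
  have hE := exp_sub_one_pos hu
  have hquot := ((hasDerivAt_id u).mul ((hasDerivAt_exp_sub_one u).inv hE.ne')).sub_const 1
  have hform := (hquot.add ((hasDerivAt_exp_sub_one u).log hE.ne')).sub (hasDerivAt_log hu.ne')
  refine (hform.div (hasDerivAt_id u) hu.ne').congr_deriv ?_
  simp only [rioSlopeDeriv, Pi.inv_apply, Pi.mul_apply, Pi.sub_apply, Pi.add_apply, id]
  field_simp
  ring

lemma hasDerivAt_rioSlopeDeriv {u : ℝ} (hu : 0 < u) :
    HasDerivAt rioSlopeDeriv (rioSlopeDeriv2 u) u := by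
  have hE := exp_sub_one_pos hu
  have h₁ := hasDerivAt_exp_sub_one u
  have ha := (hasDerivAt_exp u).div (h₁.pow 2) (pow_ne_zero 2 hE.ne')
  have hb := (hasDerivAt_exp u).div ((hasDerivAt_id u).mul h₁) (mul_ne_zero hu.ne' hE.ne')
  have hc := (hasDerivAt_log_exp_sub_one hu).div (hasDerivAt_pow 2 u) (pow_ne_zero 2 hu.ne')
  refine ((ha.neg.add hb).sub hc).congr_deriv ?_
  simp only [rioSlopeDeriv2, Pi.pow_apply, Pi.mul_apply, id]
  field_simp
  ring

noncomputable def rioSlopeDeriv2Num (u : ℝ) : ℝ :=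
  u ^ 3 * (exp u * (exp u + 1)) / (exp u - 1) ^ 3
    - u * (exp u * ((exp u - 1) + u)) / (exp u - 1) ^ 2
    - u * exp u / (exp u - 1)
    + 1 + 2 * (log (exp u - 1) - log u)

lemma rioSlopeDeriv2Num_eq {u : ℝ} (hu : 0 < u) :
    rioSlopeDeriv2Num u = u ^ 3 * rioSlopeDeriv2 u := by
  have hE := exp_sub_one_pos hu
  rw [rioSlopeDeriv2Num, rioSlopeDeriv2]
  field_simp

lemma hasDerivAt_rioSlopeDeriv2Num {u : ℝ} (hu : 0 < u) :
    HasDerivAt rioSlopeDeriv2Num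
      ((-2 * ((exp u - 1) ^ 2 - exp u * u ^ 2) ^ 2
        - u ^ 2 * exp u * (2 * (exp u - 1) - u * (exp u + 1)) ^ 2) / (u * (exp u - 1) ^ 4)) u := by
  have hE := exp_sub_one_pos hu
  have h₁ := hasDerivAt_exp_sub_one u
  have ha := ((hasDerivAt_pow 3 u).mul ((hasDerivAt_exp u).mul ((hasDerivAt_exp u).add_const 1)))
    |>.div (h₁.pow 3) (pow_ne_zero 3 hE.ne')
  have hb := ((hasDerivAt_id u).mul ((hasDerivAt_exp u).mul (h₁.add (hasDerivAt_id u)))).div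
    (h₁.pow 2) (pow_ne_zero 2 hE.ne')
  have hc := ((hasDerivAt_id u).mul (hasDerivAt_exp u)).div h₁ hE.ne'
  have hd := (hasDerivAt_log_exp_sub_one hu).const_mul 2
  refine ((((ha.sub hb).sub hc).add_const 1).add hd).congr_deriv ?_
  simp only [Pi.pow_apply, Pi.mul_apply, Pi.add_apply, id]
  field_simp
  ring

lemma tendsto_rioSlopeDeriv2Num_zero : Tendsto rioSlopeDeriv2Num (𝓝[>] 0) (𝓝 0) := by
  have hr : Tendsto (fun u : ℝ => (exp u - 1) / u) (𝓝[>] 0) (𝓝 1) := by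
    simpa [div_eq_inv_mul] using (hasDerivAt_exp 0).tendsto_slope_zero_right
  have hE : Tendsto exp (𝓝[>] 0) (𝓝 1) := by
    simpa using (continuous_exp.tendsto 0).mono_left nhdsWithin_le_nhds
  have hlog : Tendsto (fun u : ℝ => log ((exp u - 1) / u)) (𝓝[>] 0) (𝓝 0) := by
    simpa using hr.log one_ne_zero
  have ha := (hE.mul (hE.add_const 1)).div (hr.pow 3) (by norm_num)
  have hb := (hE.mul (hr.add_const 1)).div (hr.pow 2) (by norm_num)
  have h := (((ha.sub hb).sub (hE.div hr one_ne_zero)).add_const 1).add (hlog.const_mul 2)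
  norm_num at h
  refine h.congr' ?_
  filter_upwards [self_mem_nhdsWithin] with u (hu : 0 < u)
  have hE' := exp_sub_one_pos hu
  rw [rioSlopeDeriv2Num, log_div hE'.ne' hu.ne']
  field_simp

lemma rioSlopeDeriv2Num_nonpos {u : ℝ} (hu : 0 < u) : rioSlopeDeriv2Num u ≤ 0 := by
  have hanti : AntitoneOn rioSlopeDeriv2Num (Ioi 0) := by
    refine antitoneOn_of_hasDerivWithinAt_nonpos (convex_Ioi 0)
      (fun x hx => (hasDerivAt_rioSlopeDeriv2Num hx).continuousAt.continuousWithinAt)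
      (fun x hx => (hasDerivAt_rioSlopeDeriv2Num (interior_Ioi.subset hx)).hasDerivWithinAt)
      (fun x hx => ?_)
    have hx : 0 < x := interior_Ioi.subset hx
    have hE := exp_sub_one_pos hx
    refine div_nonpos_of_nonpos_of_nonneg ?_ (by positivity)
    nlinarith [sq_nonneg ((exp x - 1) ^ 2 - exp x * x ^ 2),
      mul_nonneg (mul_nonneg (sq_nonneg x) (exp_pos x).le)
        (sq_nonneg (2 * (exp x - 1) - x * (exp x + 1)))]
  refine ge_of_tendsto tendsto_rioSlopeDeriv2Num_zero ?_
  filter_upwards [Ioo_mem_nhdsGT hu] with x hx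
  exact hanti hx.1 hu hx.2.le

lemma concaveOn_rioSlope : ConcaveOn ℝ (Ioi 0) rioSlope := by
  refine concaveOn_of_hasDerivWithinAt2_nonpos (convex_Ioi 0)
    (fun x hx => (hasDerivAt_rioSlope hx).continuousAt.continuousWithinAt)
    (fun x hx => (hasDerivAt_rioSlope (interior_Ioi.subset hx)).hasDerivWithinAt)
    (fun x hx => (hasDerivAt_rioSlopeDeriv (interior_Ioi.subset hx)).hasDerivWithinAt)
    (fun x hx => ?_)
  have hx : 0 < x := interior_Ioi.subset hx
  have h := rioSlopeDeriv2Num_nonpos hx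
  rw [rioSlopeDeriv2Num_eq hx] at h
  exact nonpos_of_mul_nonpos_right h (by positivity)

lemma concaveOn_rioL_div : ConcaveOn ℝ (Ioi 0) (fun u => rioL u / u) :=
  concaveOn_rioSlope.congr fun u hu => by rw [rioSlope, rioL_eq_rioFormula hu]

lemma sum_rioL_mul_le_of_pos {ι : Type*} {s : Finset ι} {d : ι → ℝ} (hd : ∀ i ∈ s, 0 < d i)
    (hs : s.Nonempty) {t : ℝ} (ht : 0 < t) :
    ∑ i ∈ s, rioL (t * d i) ≤
      (∑ i ∈ s, d i) ^ 2 / (∑ i ∈ s, d i ^ 2) * rioL ((∑ i ∈ s, d i ^ 2) * t / ∑ i ∈ s, d i) := by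
  set D := ∑ i ∈ s, d i
  set M2 := ∑ i ∈ s, d i ^ 2
  have hD : 0 < D := Finset.sum_pos hd hs
  have hM2 : 0 < M2 := Finset.sum_pos (fun i hi => pow_pos (hd i hi) 2) hs
  have hjensen := concaveOn_rioL_div.le_map_sum (t := s) (w := fun i => d i / D)
    (p := fun i => t * d i) (fun i hi => (div_pos (hd i hi) hD).le)
    (by rw [← Finset.sum_div, div_self hD.ne'])
    (fun i hi => mul_pos ht (hd i hi))
  have hlhs : ∑ i ∈ s, (d i / D) • (rioL (t * d i) / (t * d i)) =
      (∑ i ∈ s, rioL (t * d i)) / (t * D) := by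
    rw [Finset.sum_div]
    refine Finset.sum_congr rfl fun i hi => ?_
    have := (hd i hi).ne'
    simp only [smul_eq_mul]
    field_simp
  have hrhs : ∑ i ∈ s, (d i / D) • (t * d i) = M2 * t / D := by
    rw [Finset.sum_mul, Finset.sum_div]
    exact Finset.sum_congr rfl fun i _ => by simp only [smul_eq_mul]; ring
  rw [hlhs, hrhs] at hjensen
  calc ∑ i ∈ s, rioL (t * d i) = t * D * ((∑ i ∈ s, rioL (t * d i)) / (t * D)) := by field_simp
    _ ≤ t * D * (rioL (M2 * t / D) / (M2 * t / D)) :=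
        mul_le_mul_of_nonneg_left hjensen (by positivity)
    _ = D ^ 2 / M2 * rioL (M2 * t / D) := by field_simp

lemma sum_rioL_mul_le {ι : Type*} {s : Finset ι} {d : ι → ℝ} (hd : ∀ i ∈ s, 0 ≤ d i)
    {t : ℝ} (ht : 0 ≤ t) :
    ∑ i ∈ s, rioL (t * d i) ≤
      (∑ i ∈ s, d i) ^ 2 / (∑ i ∈ s, d i ^ 2) * rioL ((∑ i ∈ s, d i ^ 2) * t / ∑ i ∈ s, d i) := by
  classical
  rcases ht.eq_or_lt with rfl | ht
  · simp [rioL_zero]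
  -- `ℓ(u)/u` is concave only on `(0, ∞)`, so the indices with `d i = 0` are dropped first.
  set s' := s.filter (fun i => d i ≠ 0)
  have hd' : ∀ i ∈ s', 0 < d i := fun i hi =>
    (hd i (Finset.mem_filter.1 hi).1).lt_of_ne' (Finset.mem_filter.1 hi).2
  have hD : ∑ i ∈ s', d i = ∑ i ∈ s, d i := Finset.sum_filter_ne_zero s
  have hM2 : ∑ i ∈ s', d i ^ 2 = ∑ i ∈ s, d i ^ 2 :=
    Finset.sum_filter_of_ne fun i _ h hdi => h (by rw [hdi]; ring)
  have hL : ∑ i ∈ s', rioL (t * d i) = ∑ i ∈ s, rioL (t * d i) :=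
    Finset.sum_filter_of_ne fun i _ h hdi => h (by rw [hdi, mul_zero, rioL_zero])
  rcases s'.eq_empty_or_nonempty with hs' | hs'
  · rw [← hD, ← hL, hs']
    simp
  · rw [← hD, ← hM2, ← hL]
    exact sum_rioL_mul_le_of_pos hd' hs' ht

lemma one_add_mul_exp_sub_one_le {u : ℝ} (hu : 0 ≤ u) (p : ℝ) :
    1 + p * (exp u - 1) ≤ exp (rioL u + p * u) := by
  rcases hu.eq_or_lt with rfl | hu
  · simp [rioL_zero]
  have hE := exp_sub_one_pos hu
  have hc : 0 < (exp u - 1) / u := div_pos hE hu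
  set x := u * (1 + p * (exp u - 1)) / (exp u - 1) - 1
  calc 1 + p * (exp u - 1) = (exp u - 1) / u * (x + 1) := by
        simp only [x]; field_simp; ring
    _ ≤ (exp u - 1) / u * exp x := mul_le_mul_of_nonneg_left (add_one_le_exp x) hc.le
    _ = exp (rioL u + p * u) := by
        rw [← exp_log hc, ← exp_add, rioL_eq_rioFormula hu, rioFormula, log_div hE.ne' hu.ne']
        congr 1
        simp only [x]
        field_simp
        ring

lemma chord_le_exp_rioL {a b t : ℝ} (hab : a < b) (ht : 0 ≤ t) :
    (b * exp (t * a) - a * exp (t * b)) / (b - a) ≤ exp (rioL (t * (b - a))) := by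
  have hba : 0 < b - a := sub_pos.2 hab
  have h := one_add_mul_exp_sub_one_le (mul_nonneg ht hba.le) (-a / (b - a))
  have hpu : -a / (b - a) * (t * (b - a)) = -(t * a) := by field_simp
  rw [hpu, exp_add, exp_neg, ← div_eq_mul_inv, le_div_iff₀ (exp_pos _)] at h
  refine le_of_eq_of_le ?_ h
  rw [mul_sub t, exp_sub]
  field_simp
  ring

section Probability

variable {Ω : Type*} [MeasurableSpace Ω] {μ : Measure Ω}

lemma exp_mul_le_chord {a b y : ℝ} (hab : a < b) (hy : y ∈ Icc a b) (t : ℝ) :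
    exp (t * y) ≤ (b * exp (t * a) - a * exp (t * b)) / (b - a)
      + y * ((exp (t * b) - exp (t * a)) / (b - a)) := by
  have hba : 0 < b - a := sub_pos.2 hab
  have h := convexOn_exp.2 (mem_univ (t * a)) (mem_univ (t * b))
    (div_nonneg (sub_nonneg.2 hy.2) hba.le) (div_nonneg (sub_nonneg.2 hy.1) hba.le)
    (by field_simp; ring)
  have harg : ((b - y) / (b - a)) • (t * a) + ((y - a) / (b - a)) • (t * b) = t * y := by
    simp only [smul_eq_mul]
    field_simp
    ring
  rw [harg] at h
  refine h.trans_eq ?_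
  simp only [smul_eq_mul]
  field_simp
  ring

lemma integral_exp_mul_le_chord [IsProbabilityMeasure μ] {Y : Ω → ℝ} (hY : Integrable Y μ)
    (hY0 : ∫ ω, Y ω ∂μ = 0) {a b : ℝ} (hab : a < b) (hmem : ∀ᵐ ω ∂μ, Y ω ∈ Icc a b) (t : ℝ) :
    ∫ ω, exp (t * Y ω) ∂μ ≤ (b * exp (t * a) - a * exp (t * b)) / (b - a) := by
  calc ∫ ω, exp (t * Y ω) ∂μ
      ≤ ∫ ω, (b * exp (t * a) - a * exp (t * b)) / (b - a)
          + Y ω * ((exp (t * b) - exp (t * a)) / (b - a)) ∂μ :=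
        integral_mono_of_nonneg (ae_of_all _ fun ω => (exp_pos _).le)
          ((integrable_const _).add (hY.mul_const _))
          (hmem.mono fun ω hω => exp_mul_le_chord hab hω t)
    _ = (b * exp (t * a) - a * exp (t * b)) / (b - a) := by
        rw [integral_add (integrable_const _) (hY.mul_const _), integral_const, integral_mul_const,
          hY0]
        simp

theorem integral_exp_mul_le_exp_rioL [IsProbabilityMeasure μ] {Y : Ω → ℝ} (hY : Integrable Y μ)
    (hY0 : ∫ ω, Y ω ∂μ = 0) {a b : ℝ} (hmem : ∀ᵐ ω ∂μ, Y ω ∈ Icc a b) {t : ℝ} (ht : 0 ≤ t) :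
    ∫ ω, exp (t * Y ω) ∂μ ≤ exp (rioL (t * (b - a))) := by
  obtain ⟨ω₀, hω₀⟩ := hmem.exists
  rcases (hω₀.1.trans hω₀.2).eq_or_lt with rfl | hab
  · have hYa : Y =ᵐ[μ] fun _ => a := hmem.mono fun ω hω => le_antisymm hω.2 hω.1
    have ha : a = 0 := by simpa [integral_congr_ae hYa] using hY0
    have h1 : (fun ω => exp (t * Y ω)) =ᵐ[μ] fun _ => 1 :=
      hYa.mono fun ω hω => by simp [hω, ha]
    simp [integral_congr_ae h1, rioL_zero]
  · exact (integral_exp_mul_le_chord hY hY0 hab hmem t).trans (chord_le_exp_rioL hab ht)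

lemma integrable_exp_of_ae_le [IsFiniteMeasure μ] {f : Ω → ℝ} (hf : AEMeasurable f μ) {c : ℝ}
    (h : ∀ᵐ ω ∂μ, f ω ≤ c) : Integrable (fun ω => exp (f ω)) μ :=
  Integrable.of_bound (measurable_exp.comp_aemeasurable hf).aestronglyMeasurable (exp c)
    (h.mono fun ω hω => by rw [norm_of_nonneg (exp_pos _).le]; exact exp_le_exp.2 hω)

lemma integrable_exp_mul_sum [IsFiniteMeasure μ] {ι : Type*} {X : ι → Ω → ℝ} {s : Finset ι}
    (hX : ∀ i ∈ s, AEMeasurable (X i) μ) {M : ι → ℝ} (hM : ∀ i ∈ s, ∀ᵐ ω ∂μ, X i ω ≤ M i)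
    {t : ℝ} (ht : 0 ≤ t) : Integrable (fun ω => exp (t * ∑ i ∈ s, X i ω)) μ := by
  refine integrable_exp_of_ae_le (aemeasurable_const.mul (Finset.aemeasurable_fun_sum s hX))
    (c := t * ∑ i ∈ s, M i) ?_
  filter_upwards [(eventually_all_finset s).2 hM] with ω hω
  exact mul_le_mul_of_nonneg_left (Finset.sum_le_sum hω) ht

lemma NegAssoc.integral_exp_mul_sum_mul_le {X : ℕ → Ω → ℝ} (hNA : NegAssoc μ X)
    {A₁ A₂ : Finset ℕ} (h₁ : ∀ i ∈ A₁, 1 ≤ i) (h₂ : ∀ j ∈ A₂, 1 ≤ j) (hdisj : Disjoint A₁ A₂)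
    {t : ℝ} (ht : 0 ≤ t)
    (hi₁ : Integrable (fun ω => exp (t * ∑ i ∈ A₁, X i ω)) μ)
    (hi₂ : Integrable (fun ω => exp (t * ∑ j ∈ A₂, X j ω)) μ)
    (hi₁₂ : Integrable (fun ω => exp (t * ∑ i ∈ A₁, X i ω) * exp (t * ∑ j ∈ A₂, X j ω)) μ) :
    ∫ ω, exp (t * ∑ i ∈ A₁, X i ω) * exp (t * ∑ j ∈ A₂, X j ω) ∂μ ≤
      (∫ ω, exp (t * ∑ i ∈ A₁, X i ω) ∂μ) * ∫ ω, exp (t * ∑ j ∈ A₂, X j ω) ∂μ := by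
  have hmono (A : Finset ℕ) : Monotone fun g : A → ℝ => exp (t * ∑ i, g i) := fun g g' h =>
    exp_le_exp.2 (mul_le_mul_of_nonneg_left (Finset.sum_le_sum fun i _ => h i) ht)
  have h := hNA A₁ A₂ h₁ h₂ hdisj _ _ (hmono A₁) (hmono A₂)
  have hsum (A : Finset ℕ) (ω : Ω) : ∑ i : A, X i ω = ∑ i ∈ A, X i ω :=
    Finset.sum_coe_sort A (X · ω)
  simp only [hsum] at h
  exact h hi₁ hi₂ hi₁₂

theorem NegAssoc.integral_exp_mul_sum_le_prod [IsProbabilityMeasure μ] {X : ℕ → Ω → ℝ}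
    (hNA : NegAssoc μ X) {s : Finset ℕ} (hs : ∀ i ∈ s, 1 ≤ i) (hX : ∀ i ∈ s, AEMeasurable (X i) μ)
    {M : ℕ → ℝ} (hM : ∀ i ∈ s, ∀ᵐ ω ∂μ, X i ω ≤ M i) {t : ℝ} (ht : 0 ≤ t) :
    ∫ ω, exp (t * ∑ i ∈ s, X i ω) ∂μ ≤ ∏ i ∈ s, ∫ ω, exp (t * X i ω) ∂μ := by
  classical
  induction s using Finset.induction_on with
  | empty => simp
  | insert j s hj ih =>
    have hintegrable (s' : Finset ℕ) (hs' : s' ⊆ insert j s) :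
        Integrable (fun ω => exp (t * ∑ i ∈ s', X i ω)) μ :=
      integrable_exp_mul_sum (fun i hi => hX i (hs' hi)) (fun i hi => hM i (hs' hi)) ht
    simp only [Finset.forall_mem_insert] at hs hX hM
    have hsplit (ω : Ω) : exp (t * ∑ i ∈ insert j s, X i ω) =
        exp (t * ∑ i ∈ {j}, X i ω) * exp (t * ∑ i ∈ s, X i ω) := by
      rw [Finset.sum_insert hj, Finset.sum_singleton, mul_add, exp_add]
    calc ∫ ω, exp (t * ∑ i ∈ insert j s, X i ω) ∂μ
        = ∫ ω, exp (t * ∑ i ∈ {j}, X i ω) * exp (t * ∑ i ∈ s, X i ω) ∂μ := by simp_rw [hsplit]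
      _ ≤ (∫ ω, exp (t * ∑ i ∈ {j}, X i ω) ∂μ) * ∫ ω, exp (t * ∑ i ∈ s, X i ω) ∂μ :=
        hNA.integral_exp_mul_sum_mul_le (by simpa using hs.1) hs.2
          (Finset.disjoint_singleton_left.2 hj) ht (hintegrable _ (by simp))
          (hintegrable _ (by simp)) ((hintegrable _ le_rfl).congr (ae_of_all _ hsplit))
      _ ≤ ∏ i ∈ insert j s, ∫ ω, exp (t * X i ω) ∂μ := by
        simp only [Finset.prod_insert hj, Finset.sum_singleton]
        exact mul_le_mul_of_nonneg_left (ih hs.2 hX.2 hM.2)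
          (integral_nonneg fun ω => (exp_pos _).le)

end Probability

theorem stmt18_general {Ω : Type*} [MeasurableSpace Ω] (μ : Measure Ω) [IsProbabilityMeasure μ]
    (X : ℕ → Ω → ℝ) (hNA : NegAssoc μ X)
    (hint : ∀ i, 1 ≤ i → Integrable (X i) μ)
    (hmean : ∀ i, 1 ≤ i → ∫ ω, X i ω ∂μ = 0)
    (n : ℕ) (mlo Mhi : ℕ → ℝ)
    (hbd : ∀ i ∈ Finset.Icc 1 n, ∀ᵐ ω ∂μ, mlo i ≤ X i ω ∧ X i ω ≤ Mhi i)
    (t : ℝ) (ht : 0 ≤ t) :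
    ∫ ω, Real.exp (t * pSum X n ω) ∂μ ≤
      Real.exp ((∑ i ∈ Finset.Icc 1 n, (Mhi i - mlo i)) ^ 2 /
          (∑ i ∈ Finset.Icc 1 n, (Mhi i - mlo i) ^ 2) *
        rioL ((∑ i ∈ Finset.Icc 1 n, (Mhi i - mlo i) ^ 2) * t /
          (∑ i ∈ Finset.Icc 1 n, (Mhi i - mlo i)))) := by
  have hpos (i : ℕ) (hi : i ∈ Finset.Icc 1 n) : 1 ≤ i := (Finset.mem_Icc.1 hi).1
  have hwidth (i : ℕ) (hi : i ∈ Finset.Icc 1 n) : 0 ≤ Mhi i - mlo i := by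
    obtain ⟨ω, hω⟩ := (hbd i hi).exists
    exact sub_nonneg.2 (hω.1.trans hω.2)
  calc ∫ ω, exp (t * pSum X n ω) ∂μ
      ≤ ∏ i ∈ Finset.Icc 1 n, ∫ ω, exp (t * X i ω) ∂μ :=
        hNA.integral_exp_mul_sum_le_prod hpos (fun i hi => (hint i (hpos i hi)).aemeasurable)
          (fun i hi => (hbd i hi).mono fun ω hω => hω.2) ht
    _ ≤ ∏ i ∈ Finset.Icc 1 n, exp (rioL (t * (Mhi i - mlo i))) :=
        Finset.prod_le_prod (fun i _ => integral_nonneg fun ω => (exp_pos _).le) fun i hi =>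
          integral_exp_mul_le_exp_rioL (hint i (hpos i hi)) (hmean i (hpos i hi)) (hbd i hi) ht
    _ = exp (∑ i ∈ Finset.Icc 1 n, rioL (t * (Mhi i - mlo i))) := (exp_sum _ _).symm
    _ ≤ _ := exp_le_exp.2 (sum_rioL_mul_le hwidth ht)

/-- Rio-type moment bound (2.37): for centered NA random variables with
`m_i ≤ X_i ≤ M_i` a.s., `M²(n) = ∑(M_i − m_i)²` and `D(n) = ∑(M_i − m_i)`, for any `t ≥ 0`,
`E[e^{tS_n}] ≤ exp{(D²(n)/M²(n)) ℓ(M²(n)t/D(n))}`. -/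
theorem stmt18 {Ω : Type*} [MeasurableSpace Ω] (μ : Measure Ω) [IsProbabilityMeasure μ]
    (X : ℕ → Ω → ℝ) (hmeas : ∀ i, Measurable (X i)) (hNA : NegAssoc μ X)
    (hint : ∀ i, 1 ≤ i → Integrable (X i) μ)
    (hmean : ∀ i, 1 ≤ i → ∫ ω, X i ω ∂μ = 0)
    (n : ℕ) (hn : 1 ≤ n) (mlo Mhi : ℕ → ℝ)
    (hbd : ∀ i ∈ Finset.Icc 1 n, ∀ᵐ ω ∂μ, mlo i ≤ X i ω ∧ X i ω ≤ Mhi i)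
    (t : ℝ) (ht : 0 ≤ t) :
    ∫ ω, Real.exp (t * pSum X n ω) ∂μ ≤
      Real.exp ((∑ i ∈ Finset.Icc 1 n, (Mhi i - mlo i)) ^ 2 /
          (∑ i ∈ Finset.Icc 1 n, (Mhi i - mlo i) ^ 2) *
        rioL ((∑ i ∈ Finset.Icc 1 n, (Mhi i - mlo i) ^ 2) * t /
          (∑ i ∈ Finset.Icc 1 n, (Mhi i - mlo i)))) :=
  stmt18_general μ X hNA hint hmean n mlo Mhi hbd t ht
end
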